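/- arXiv:2412.11658 — 6 statements merged into one kernel-verified Lean document; each statement's English description precedes it below -/
import Mathlib

section
/- There exists a constant D > 0 (depending only on the dimension d) such that for every unimodular lattice Λ in ℝ^d and every pair of primitive subgroups Λ_1, Λ_2 of Λ, one has ‖Λ_1 ∩ Λ_2‖ · ‖Λ_1 + Λ_2‖ ≤ D · ‖Λ_1‖ · ‖Λ_2‖, where ‖L‖ denotes the sup-norm of the wedge product of a ℤ-basis of L (and ‖{0}‖ = 1). -/
/-- The sup norm of the wedge `v_1 ∧ … ∧ v_k ∈ ∧^k ℝ^d` in the standard basis (maximum of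
the absolute values of the `k × k` minors); for `k = 0` this equals `1`. -/
noncomputable def wedgeNorm {d k : ℕ} (v : Fin k → Fin d → ℝ) : ℝ :=
  ⨆ I : {I : Fin k → Fin d // StrictMono I},
    |(Matrix.of fun p q : Fin k => v q (I.1 p)).det|

/-- `v : Fin k → ℝ^d` is a ℤ-basis of the discrete subgroup `L`. -/
def IsZBasis {d k : ℕ} (v : Fin k → Fin d → ℝ) (L : AddSubgroup (Fin d → ℝ)) : Prop :=
  LinearIndependent ℝ v ∧ AddSubgroup.closure (Set.range v) = L

/-- The covolume-type norm `‖L‖` of a discrete subgroup `L` of `ℝ^d`: the sup norm of the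
wedge of a ℤ-basis of `L` (well defined up to sign, hence the abs; `‖{0}‖ = 1`). -/
noncomputable def latNorm {d : ℕ} (L : AddSubgroup (Fin d → ℝ)) : ℝ :=
  sInf {r : ℝ | ∃ (k : ℕ) (v : Fin k → Fin d → ℝ), IsZBasis v L ∧ r = wedgeNorm v}

/-- `L` is a primitive subgroup of `Λ`, i.e. `L = Λ ∩ span_ℝ(L)`. -/
def IsPrimitiveIn {d : ℕ} (L Λ : AddSubgroup (Fin d → ℝ)) : Prop :=
  L ≤ Λ ∧ (L : Set (Fin d → ℝ)) =
    (Λ : Set (Fin d → ℝ)) ∩ (Submodule.span ℝ (L : Set (Fin d → ℝ)) : Set (Fin d → ℝ))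

/-- `Λ` is a unimodular lattice in `ℝ^d`. -/
def IsUnimodularLattice {d : ℕ} (Λ : AddSubgroup (Fin d → ℝ)) : Prop :=
  ∃ B : Fin d → Fin d → ℝ, |(Matrix.of fun i j => B i j).det| = 1 ∧ IsZBasis B Λ

/-!
Choose a `ℤ`-basis `w` of `Λ₁ ∩ Λ₂`. Since `Λ₁ ∩ Λ₂` is primitive, the Smith normal form extends
it to bases `(w, a)` of `Λ₁` and `(w, b)` of `Λ₂`, and then `(w, a, b)` is a basis of `Λ₁ + Λ₂`.
The claim becomes `‖w‖ ‖w ∧ a ∧ b‖ ≤ D ‖w ∧ a‖ ‖w ∧ b‖`. For Gram determinants `G` this holds with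
`D = 1`: if `b₂`, `b₁` are the components of `b` orthogonal to `span (w, a)` and to `span w`, then
`G(w,a,b) = G(w,a) G(b₂)` and `G(w,b) = G(w) G(b₁)`. By Cauchy–Binet, `G(v)` is the sum of the
squares of the maximal minors of `v`. Since `b₁ = b₂ + ρ` with `ρ ⟂ b₂`, `G(b₁)` is the Gram
determinant of the block rows `(b₂ | ρ)`, whose minors include those of `b₂`; so `G(b₂) ≤ G(b₁)`.
There are at most `2 ^ d` maximal minors, so `‖v‖ ^ 2 ≤ G(v) ≤ 2 ^ d ‖v‖ ^ 2`, giving `D = 2 ^ d`.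
-/

open Matrix Finset

namespace Matrix

variable {R : Type*} [CommRing R] {k n : ℕ}

theorem det_mul_eq_sum_det_submatrix_mul_prod (A : Matrix (Fin k) (Fin n) R)
    (B : Matrix (Fin n) (Fin k) R) :
    (A * B).det = ∑ f : Fin k → Fin n, (A.submatrix id f).det * ∏ i, B (f i) i := by
  calc (A * B).det
      = ∑ f : Fin k → Fin n, ∑ σ : Equiv.Perm (Fin k),
          (Equiv.Perm.sign σ : R) * ∏ i, A (σ i) (f i) * B (f i) i := by
        simp only [det_apply', mul_apply, prod_univ_sum, mul_sum, Fintype.piFinset_univ]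
        rw [Finset.sum_comm]
    _ = _ := by
        refine sum_congr rfl fun f _ => ?_
        simp only [det_apply', prod_mul_distrib, sum_mul, submatrix_apply, id, mul_assoc]

/-- Cauchy–Binet formula. -/
theorem det_mul_eq_sum_strictMono (A : Matrix (Fin k) (Fin n) R) (B : Matrix (Fin n) (Fin k) R) :
    (A * B).det = ∑ I : {I : Fin k → Fin n // StrictMono I},
      (A.submatrix id I).det * (B.submatrix I id).det := by
  classical
  set g : (Fin k → Fin n) → R := fun f => (A.submatrix id f).det * ∏ i, B (f i) i
  have hg : ∀ (I : Fin k → Fin n) (σ : Equiv.Perm (Fin k)),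
      g (I ∘ σ) = (A.submatrix id I).det * ((Equiv.Perm.sign σ : R) * ∏ i, B (I (σ i)) i) := by
    intro I σ
    have : A.submatrix id (I ∘ σ) = (A.submatrix id I).submatrix id σ := rfl
    simp only [g, this, det_permute', Function.comp_apply]
    ring
  calc (A * B).det = ∑ f ∈ univ.filter Function.Injective, g f := by
        rw [sum_filter_of_ne, det_mul_eq_sum_det_submatrix_mul_prod]
        intro f _ hf
        by_contra hinj
        apply hf
        obtain ⟨i, j, hij, hne⟩ : ∃ i j, f i = f j ∧ i ≠ j := by
          simpa [Function.Injective, not_forall] using hinj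
        have hcol : ∀ l, A.submatrix id f l i = A.submatrix id f l j := fun l => by simp [hij]
        simp only [g, det_zero_of_column_eq hne hcol, zero_mul]
    _ = ∑ p : {I : Fin k → Fin n // StrictMono I} × Equiv.Perm (Fin k), g (p.1.1 ∘ p.2) := by
        symm
        refine sum_nbij (fun p => p.1.1 ∘ p.2) (fun p _ => ?_) (fun p _ q _ hpq => ?_)
          (fun f hf => ?_) (fun _ _ => rfl)
        · simpa using p.1.2.injective.comp p.2.injective
        · have hpq : p.1.1 ∘ p.2 = q.1.1 ∘ q.2 := hpq
          have hI : p.1 = q.1 := Subtype.ext <| (p.1.2.range_inj q.1.2).mp <| by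
            rw [← EquivLike.range_comp _ p.2, hpq, EquivLike.range_comp]
          refine Prod.ext hI (Equiv.ext fun i => q.1.2.injective ?_)
          rw [hI] at hpq
          exact congrFun hpq i
        · have hf : Function.Injective f := by simpa using hf
          set σ := Tuple.sort f
          refine ⟨(⟨f ∘ σ, (Tuple.monotone_sort f).strictMono_of_injective
            (hf.comp σ.injective)⟩, σ⁻¹), mem_univ _, ?_⟩
          ext i
          simp
    _ = _ := by
        rw [Fintype.sum_prod_type]
        refine sum_congr rfl fun I _ => ?_
        simp only [hg, ← mul_sum, det_apply' (B.submatrix I id), submatrix_apply, id]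

end Matrix

noncomputable def gramDet {ι n : Type*} [Fintype ι] [DecidableEq ι] [Fintype n]
    (M : Matrix ι n ℝ) : ℝ :=
  (M * Mᵀ).det

section GramDet

variable {ι κ n : Type*} [Fintype ι] [DecidableEq ι] [Fintype n]

theorem gramDet_nonneg (M : Matrix ι n ℝ) : 0 ≤ gramDet M := by
  have := posSemidef_self_mul_conjTranspose M
  rw [conjTranspose_eq_transpose_of_trivial] at this
  exact this.det_nonneg

theorem gramDet_mul (T : Matrix ι ι ℝ) (M : Matrix ι n ℝ) :
    gramDet (T * M) = T.det ^ 2 * gramDet M := by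
  rw [gramDet, gramDet, transpose_mul, Matrix.mul_assoc, ← Matrix.mul_assoc M, det_mul, det_mul,
    det_transpose]
  ring

theorem gramDet_submatrix_equiv [Fintype κ] [DecidableEq κ] (M : Matrix ι n ℝ) (e : κ ≃ ι) :
    gramDet (M.submatrix e id) = gramDet M := by
  rw [gramDet, gramDet, transpose_submatrix, ← submatrix_mul _ _ _ _ _ Function.bijective_id,
    det_submatrix_equiv_self]

theorem gramDet_fromRows_of_mul_transpose_eq_zero [Fintype κ] [DecidableEq κ] {U : Matrix ι n ℝ}
    {X : Matrix κ n ℝ} (h : U * Xᵀ = 0) : gramDet (fromRows U X) = gramDet U * gramDet X := by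
  have h' : X * Uᵀ = 0 := by simpa using congrArg transpose h
  rw [gramDet, transpose_fromRows, fromRows_mul_fromCols, h, h', det_fromBlocks_zero₁₂]
  rfl

theorem gramDet_fromRows_sub_mul [Fintype κ] [DecidableEq κ] (U : Matrix ι n ℝ)
    (X : Matrix κ n ℝ) (C : Matrix κ ι ℝ) :
    gramDet (fromRows U (X - C * U)) = gramDet (fromRows U X) := by
  have : fromRows U (X - C * U) =
      (fromBlocks 1 0 (-C) 1 : Matrix (ι ⊕ κ) (ι ⊕ κ) ℝ) * fromRows U X := by
    rw [fromBlocks_mul_fromRows]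
    simp [sub_eq_neg_add]
  rw [this, gramDet_mul, det_fromBlocks_zero₁₂]
  simp

theorem isUnit_mul_transpose {U : Matrix ι n ℝ} (hU : LinearIndependent ℝ U.row) :
    IsUnit (U * Uᵀ) := by
  rw [← linearIndependent_rows_iff_isUnit, linearIndependent_iff_card_eq_finrank_span,
    Set.finrank, ← rank_eq_finrank_span_row, rank_self_mul_transpose, hU.rank_matrix]

theorem exists_sub_mul_mul_transpose_eq_zero {U : Matrix ι n ℝ} (hU : LinearIndependent ℝ U.row)
    (X : Matrix κ n ℝ) : ∃ C : Matrix κ ι ℝ, (X - C * U) * Uᵀ = 0 := by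
  refine ⟨X * Uᵀ * (U * Uᵀ)⁻¹, ?_⟩
  rw [Matrix.sub_mul, Matrix.mul_assoc _ U, Matrix.mul_assoc, nonsing_inv_mul _
    ((isUnit_iff_isUnit_det _).mp (isUnit_mul_transpose hU)), Matrix.mul_one, sub_self]

end GramDet

section CauchyBinet

variable {k n : ℕ}

theorem gramDet_eq_sum_sq (M : Matrix (Fin k) (Fin n) ℝ) :
    gramDet M = ∑ I : {I : Fin k → Fin n // StrictMono I}, (M.submatrix id I).det ^ 2 := by
  rw [gramDet, det_mul_eq_sum_strictMono]
  refine sum_congr rfl fun I _ => ?_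
  rw [← transpose_submatrix, det_transpose, sq]

theorem gramDet_submatrix_le {n' : ℕ} (M : Matrix (Fin k) (Fin n) ℝ) {e : Fin n' → Fin n}
    (he : StrictMono e) : gramDet (M.submatrix id e) ≤ gramDet M := by
  let compE : {I : Fin k → Fin n' // StrictMono I} ↪ {I : Fin k → Fin n // StrictMono I} :=
    ⟨fun I => ⟨e ∘ I, he.comp I.2⟩, fun I J h => Subtype.ext <|
      funext fun i => he.injective (congrFun (congrArg Subtype.val h) i)⟩
  rw [gramDet_eq_sum_sq, gramDet_eq_sum_sq]
  calc ∑ I : {I : Fin k → Fin n' // StrictMono I}, ((M.submatrix id e).submatrix id I).det ^ 2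
      = ∑ I ∈ univ.map compE, (M.submatrix id I).det ^ 2 := by
        rw [sum_map]; rfl
    _ ≤ _ := sum_le_sum_of_subset_of_nonneg (subset_univ _) fun _ _ _ => sq_nonneg _

theorem gramDet_le_gramDet_add {X Y : Matrix (Fin k) (Fin n) ℝ} (h : X * Yᵀ = 0) :
    gramDet X ≤ gramDet (X + Y) := by
  set Z := (fromCols X Y).submatrix id finSumFinEquiv.symm
  have hZX : Z.submatrix id (Fin.castAdd n) = X := by ext i j; simp [Z]
  have hZ : Z * Zᵀ = (X + Y) * (X + Y)ᵀ := by
    have hYX : Y * Xᵀ = 0 := by simpa using congrArg transpose h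
    rw [transpose_submatrix, submatrix_mul_equiv, submatrix_id_id, transpose_fromCols,
      fromCols_mul_fromRows, transpose_add, Matrix.mul_add, Matrix.add_mul, Matrix.add_mul, h, hYX,
      add_zero, zero_add]
  calc gramDet X = gramDet (Z.submatrix id (Fin.castAdd n)) := by rw [hZX]
    _ ≤ gramDet Z := gramDet_submatrix_le Z (Fin.strictMono_castAdd n)
    _ = gramDet (X + Y) := by rw [gramDet, gramDet, hZ]

end CauchyBinet

theorem gramDet_submatrix_mul_gramDet_fromRows_le {ι κ : Type*} [Fintype ι] [DecidableEq ι]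
    [Fintype κ] [DecidableEq κ] {n q : ℕ} {V : Matrix κ (Fin n) ℝ} (hV : LinearIndependent ℝ V.row)
    {f : ι → κ} (hf : Function.Injective f) (B : Matrix (Fin q) (Fin n) ℝ) :
    gramDet (V.submatrix f id) * gramDet (fromRows V B) ≤
      gramDet V * gramDet (fromRows (V.submatrix f id) B) := by
  set W := V.submatrix f id
  obtain ⟨C, hC⟩ := exists_sub_mul_mul_transpose_eq_zero hV B
  obtain ⟨C', hC'⟩ := exists_sub_mul_mul_transpose_eq_zero (U := W) (hV.comp f hf) B
  have hW : (B - C * V) * Wᵀ = 0 := congrArg (·.submatrix id f) hC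
  have hGV : gramDet (fromRows V B) = gramDet V * gramDet (B - C * V) := by
    rw [← gramDet_fromRows_sub_mul V B C, gramDet_fromRows_of_mul_transpose_eq_zero]
    simpa using congrArg transpose hC
  have hGW : gramDet (fromRows W B) = gramDet W * gramDet (B - C' * W) := by
    rw [← gramDet_fromRows_sub_mul W B C', gramDet_fromRows_of_mul_transpose_eq_zero]
    simpa using congrArg transpose hC'
  have hle : gramDet (B - C * V) ≤ gramDet (B - C' * W) := by
    have horth : (B - C * V) * (C * V - C' * W)ᵀ = 0 := by
      rw [transpose_sub, transpose_mul, transpose_mul, Matrix.mul_sub, ← Matrix.mul_assoc,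
        ← Matrix.mul_assoc, hC, hW, Matrix.zero_mul, Matrix.zero_mul, sub_zero]
    simpa using gramDet_le_gramDet_add horth
  rw [hGV, hGW]
  have := mul_le_mul_of_nonneg_left hle (mul_nonneg (gramDet_nonneg V) (gramDet_nonneg W))
  linarith

section WedgeNorm

variable {k d : ℕ}

theorem wedgeNorm_eq_iSup (v : Fin k → Fin d → ℝ) :
    wedgeNorm v = ⨆ I : {I : Fin k → Fin d // StrictMono I}, |((of v).submatrix id I).det| := by
  simp only [wedgeNorm, ← det_transpose ((of v).submatrix id _)]
  rfl

theorem abs_det_submatrix_le_wedgeNorm (v : Fin k → Fin d → ℝ)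
    (I : {I : Fin k → Fin d // StrictMono I}) : |((of v).submatrix id I).det| ≤ wedgeNorm v := by
  rw [wedgeNorm_eq_iSup]
  exact le_ciSup (f := fun I : {I : Fin k → Fin d // StrictMono I} =>
    |((of v).submatrix id I.1).det|) (Set.finite_range _).bddAbove I

theorem wedgeNorm_nonneg (v : Fin k → Fin d → ℝ) : 0 ≤ wedgeNorm v :=
  Real.iSup_nonneg fun _ => abs_nonneg _

theorem wedgeNorm_mul (T : Matrix (Fin k) (Fin k) ℝ) (v : Fin k → Fin d → ℝ) :
    wedgeNorm (T * of v).row = |T.det| * wedgeNorm v := by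
  rw [wedgeNorm_eq_iSup, wedgeNorm_eq_iSup, Real.mul_iSup_of_nonneg (abs_nonneg _)]
  refine iSup_congr fun I => ?_
  rw [← abs_mul, ← det_mul]
  rfl

theorem card_strictMono_le_two_pow : Fintype.card {I : Fin k → Fin d // StrictMono I} ≤ 2 ^ d := by
  classical
  calc Fintype.card {I : Fin k → Fin d // StrictMono I} ≤ Fintype.card (Finset (Fin d)) :=
        Fintype.card_le_of_injective (fun I => univ.image I.1) fun I J h => Subtype.ext <|
          (I.2.range_inj J.2).mp <| by
            simpa using congrArg ((↑) : Finset (Fin d) → Set (Fin d)) h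
    _ = 2 ^ d := by rw [Fintype.card_finset, Fintype.card_fin]

theorem sq_wedgeNorm_le_gramDet (v : Fin k → Fin d → ℝ) : wedgeNorm v ^ 2 ≤ gramDet (of v) := by
  refine (Real.le_sqrt (wedgeNorm_nonneg v) (gramDet_nonneg _)).mp ?_
  rw [wedgeNorm_eq_iSup]
  refine Real.iSup_le (fun I => (Real.le_sqrt (abs_nonneg _) (gramDet_nonneg _)).mpr ?_)
    (Real.sqrt_nonneg _)
  rw [sq_abs, gramDet_eq_sum_sq]
  exact single_le_sum (f := fun I : {I : Fin k → Fin d // StrictMono I} =>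
    ((of v).submatrix id I).det ^ 2) (fun _ _ => sq_nonneg _) (mem_univ I)

theorem gramDet_le_two_pow_mul_sq_wedgeNorm (v : Fin k → Fin d → ℝ) :
    gramDet (of v) ≤ 2 ^ d * wedgeNorm v ^ 2 := by
  rw [gramDet_eq_sum_sq]
  calc ∑ I : {I : Fin k → Fin d // StrictMono I}, ((of v).submatrix id I).det ^ 2
      ≤ ∑ _I : {I : Fin k → Fin d // StrictMono I}, wedgeNorm v ^ 2 :=
        sum_le_sum fun I _ => by
          rw [← sq_abs]
          exact pow_le_pow_left₀ (abs_nonneg _) (abs_det_submatrix_le_wedgeNorm v I) 2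
    _ ≤ 2 ^ d * wedgeNorm v ^ 2 := by
        rw [sum_const, card_univ, nsmul_eq_mul]
        gcongr
        exact_mod_cast card_strictMono_le_two_pow

end WedgeNorm

theorem gramDet_finAppend {m p n : ℕ} (u : Fin m → Fin n → ℝ) (x : Fin p → Fin n → ℝ) :
    gramDet (of (Fin.append u x)) = gramDet (fromRows (of u) (of x)) := by
  rw [← gramDet_submatrix_equiv _ finSumFinEquiv.symm]
  congr 1
  ext i j
  induction i using Fin.addCases <;> simp [fromRows_apply_inl, fromRows_apply_inr]

theorem wedgeNorm_mul_wedgeNorm_append_le {m p q d : ℕ} (w : Fin m → Fin d → ℝ)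
    (a : Fin p → Fin d → ℝ) (b : Fin q → Fin d → ℝ) (h : LinearIndependent ℝ (Fin.append w a)) :
    wedgeNorm w * wedgeNorm (Fin.append (Fin.append w a) b) ≤
      2 ^ d * wedgeNorm (Fin.append w a) * wedgeNorm (Fin.append w b) := by
  have hw : (of (Fin.append w a)).submatrix (Fin.castAdd p) id = of w := by ext; simp
  have key : gramDet (of w) * gramDet (of (Fin.append (Fin.append w a) b)) ≤
      gramDet (of (Fin.append w a)) * gramDet (of (Fin.append w b)) := by
    rw [gramDet_finAppend (Fin.append w a) b, gramDet_finAppend w b, ← hw]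
    exact gramDet_submatrix_mul_gramDet_fromRows_le (V := of (Fin.append w a)) h
      (Fin.castAdd_injective m p) b
  have hwa := wedgeNorm_nonneg (Fin.append w a)
  have hwb := wedgeNorm_nonneg (Fin.append w b)
  refine (pow_le_pow_iff_left₀ (mul_nonneg (wedgeNorm_nonneg _) (wedgeNorm_nonneg _))
    (by positivity) two_ne_zero).mp ?_
  calc (wedgeNorm w * wedgeNorm (Fin.append (Fin.append w a) b)) ^ 2
      ≤ gramDet (of w) * gramDet (of (Fin.append (Fin.append w a) b)) := by
        rw [mul_pow]
        exact mul_le_mul (sq_wedgeNorm_le_gramDet _) (sq_wedgeNorm_le_gramDet _) (sq_nonneg _)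
          (gramDet_nonneg _)
    _ ≤ gramDet (of (Fin.append w a)) * gramDet (of (Fin.append w b)) := key
    _ ≤ (2 ^ d * wedgeNorm (Fin.append w a) ^ 2) * (2 ^ d * wedgeNorm (Fin.append w b) ^ 2) :=
        mul_le_mul (gramDet_le_two_pow_mul_sq_wedgeNorm _) (gramDet_le_two_pow_mul_sq_wedgeNorm _)
          (gramDet_nonneg _) (by positivity)
    _ = (2 ^ d * wedgeNorm (Fin.append w a) * wedgeNorm (Fin.append w b)) ^ 2 := by ring

theorem Fin.range_append {α : Type*} {m p : ℕ} (u : Fin m → α) (x : Fin p → α) :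
    Set.range (Fin.append u x) = Set.range u ∪ Set.range x := by
  rw [← EquivLike.range_comp _ finSumFinEquiv, ← Set.Sum.elim_range]
  congr 1
  ext (i | i) <;> simp

theorem linearIndependent_finAppend_iff {R M : Type*} [Ring R] [AddCommGroup M] [Module R M]
    {m p : ℕ} {u : Fin m → M} {x : Fin p → M} :
    LinearIndependent R (Fin.append u x) ↔ LinearIndependent R u ∧ LinearIndependent R x ∧
      Disjoint (Submodule.span R (Set.range u)) (Submodule.span R (Set.range x)) := by
  rw [← linearIndependent_equiv finSumFinEquiv, linearIndependent_sum]
  simp [Function.comp_def]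

theorem AddSubgroup.closure_range_finAppend {G : Type*} [AddGroup G] {m p : ℕ} (u : Fin m → G)
    (x : Fin p → G) :
    closure (Set.range (Fin.append u x)) = closure (Set.range u) ⊔ closure (Set.range x) := by
  rw [Fin.range_append, closure_union]

theorem span_real_eq_of_closure_eq {E : Type*} [AddCommGroup E] [Module ℝ E] {s t : Set E}
    (h : AddSubgroup.closure s = AddSubgroup.closure t) :
    Submodule.span ℝ s = Submodule.span ℝ t := by
  have : Submodule.span ℤ s = Submodule.span ℤ t := by
    rw [← AddSubgroup.toIntSubmodule_closure, h, AddSubgroup.toIntSubmodule_closure]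
  rw [← Submodule.span_span_of_tower ℤ ℝ s, this, Submodule.span_span_of_tower]

namespace IsZBasis

variable {d k k' : ℕ} {L : AddSubgroup (Fin d → ℝ)} {v : Fin k → Fin d → ℝ}

theorem span_int_eq (h : IsZBasis v L) :
    Submodule.span ℤ (Set.range v) = AddSubgroup.toIntSubmodule L := by
  rw [← h.2, AddSubgroup.toIntSubmodule_closure]

noncomputable def basis (h : IsZBasis v L) :
    Module.Basis (Fin k) ℤ (AddSubgroup.toIntSubmodule L) :=
  (Module.Basis.span (h.1.restrict_scalars' ℤ)).map (LinearEquiv.ofEq _ _ h.span_int_eq)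

@[simp]
theorem basis_apply (h : IsZBasis v L) (i : Fin k) : (h.basis i : Fin d → ℝ) = v i := by
  simp [basis, Module.Basis.span_apply]

theorem card_eq {v' : Fin k' → Fin d → ℝ} (h : IsZBasis v L) (h' : IsZBasis v' L) : k = k' := by
  simpa using Fintype.card_congr (h.basis.indexEquiv h'.basis)

theorem wedgeNorm_eq {v' : Fin k → Fin d → ℝ} (h : IsZBasis v L) (h' : IsZBasis v' L) :
    wedgeNorm v' = wedgeNorm v := by
  set P := h.basis.toMatrix h'.basis
  have hP : IsUnit P.det :=
    isUnit_det_of_right_inverse (h.basis.toMatrix_mul_toMatrix_flip h'.basis)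
  have hv' : v' = ((P.map (Int.cast : ℤ → ℝ))ᵀ * of v).row := by
    funext j x
    have hj : v' j = ∑ i, P i j • v i := by
      rw [← h'.basis_apply, ← h.basis.sum_toMatrix_smul_self h'.basis j]
      simp only [Submodule.coe_sum, SetLike.val_smul, basis_apply, P]
    simp [hj, mul_apply, Finset.sum_apply]
  rw [hv', wedgeNorm_mul, det_transpose, ← Int.cast_det]
  rcases Int.isUnit_iff.mp hP with hP | hP <;> simp [hP]

theorem of_closure_eq (h : IsZBasis v L) {v' : Fin k → Fin d → ℝ}
    (h' : AddSubgroup.closure (Set.range v') = L) : IsZBasis v' L := by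
  refine ⟨?_, h'⟩
  rw [linearIndependent_iff_card_eq_finrank_span, Set.finrank,
    span_real_eq_of_closure_eq (h'.trans h.2.symm), finrank_span_eq_card h.1]

theorem linearIndependent_of_int {n : ℕ} {B : Fin n → Fin d → ℝ} (hB : IsZBasis B L)
    (hv : ∀ i, v i ∈ L) (hli : LinearIndependent ℤ v) : LinearIndependent ℝ v := by
  let v' : Fin k → AddSubgroup.toIntSubmodule L := fun i => ⟨v i, hv i⟩
  let c : Fin k → Fin n → ℤ := fun i => hB.basis.equivFun (v' i)
  have hc : LinearIndependent ℤ c :=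
    (LinearIndependent.of_comp (v := v') (AddSubgroup.toIntSubmodule L).subtype hli).map' _
      hB.basis.equivFun.ker
  have hvc : v = Fintype.linearCombination ℝ B ∘ fun i => algebraMap ℤ ℝ ∘ c i := by
    funext i
    have hi : v i = ((∑ j, c i j • hB.basis j : AddSubgroup.toIntSubmodule L) : Fin d → ℝ) := by
      rw [hB.basis.sum_equivFun]
    rw [hi]
    simp [Fintype.linearCombination_apply, Int.cast_smul_eq_zsmul]
  have hc' : LinearIndependent ℝ fun i => algebraMap ℤ ℝ ∘ c i :=
    linearIndependent_algebraMap_comp_iff.mpr hc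
  have hB' := linearIndependent_iff_injective_fintypeLinearCombination.mp hB.1
  rw [hvc]
  exact hc'.map' _ (LinearMap.ker_eq_bot.mpr hB')

end IsZBasis

theorem latNorm_eq {d k : ℕ} {L : AddSubgroup (Fin d → ℝ)} {v : Fin k → Fin d → ℝ}
    (h : IsZBasis v L) : latNorm L = wedgeNorm v := by
  have : {r : ℝ | ∃ (k : ℕ) (v : Fin k → Fin d → ℝ), IsZBasis v L ∧ r = wedgeNorm v} =
      {wedgeNorm v} := by
    ext r
    constructor
    · rintro ⟨k', v', h', rfl⟩
      obtain rfl := h.card_eq h'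
      exact h.wedgeNorm_eq h'
    · rintro rfl
      exact ⟨k, v, h, rfl⟩
  rw [latNorm, this, csInf_singleton]

theorem Submodule.exists_adapted_basis_of_saturated {M : Type*} [AddCommGroup M] {n : ℕ}
    (bM : Module.Basis (Fin n) ℤ M) {N L : Submodule ℤ M} (hNL : N ≤ L)
    (hN : ∀ x ∈ L, ∀ c : ℤ, c ≠ 0 → c • x ∈ N → x ∈ N) :
    ∃ (r s : ℕ) (e : Fin (r + s) → M), LinearIndependent ℤ e ∧ span ℤ (Set.range e) = L ∧
      span ℤ (Set.range (e ∘ Fin.castAdd s)) = N := by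
  obtain ⟨r, o, hro, bL, bN, c, hc⟩ := exists_smith_normal_form_of_le bM N L hNL
  have ho : r + (o - r) = o := by omega
  refine ⟨r, o - r, L.subtype ∘ bL ∘ finCongr ho, ?_, ?_, le_antisymm ?_ fun x hx => ?_⟩
  · exact (bL.linearIndependent.map' _ L.ker_subtype).comp _ (Fin.cast_injective ho)
  · rw [Set.range_comp, EquivLike.range_comp _ (finCongr ho), ← map_span, bL.span_eq, map_top,
      range_subtype]
  · rw [span_le]
    rintro _ ⟨i, rfl⟩
    have hci : c i ≠ 0 := by
      rintro h0
      apply bN.ne_zero i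
      ext
      simp [hc i, h0]
    show (bL (Fin.castLE hro i) : M) ∈ N
    exact hN _ (bL _).2 (c i) hci (hc i ▸ (bN i).2)
  · have := congrArg Subtype.val (bN.sum_repr ⟨x, hx⟩)
    simp only [coe_sum, SetLike.val_smul, hc, smul_smul] at this
    rw [← this]
    exact sum_mem fun i _ => smul_mem _ _ (subset_span ⟨i, rfl⟩)

theorem IsPrimitiveIn.inf {d : ℕ} {Λ L₁ L₂ : AddSubgroup (Fin d → ℝ)} (h₁ : IsPrimitiveIn L₁ Λ)
    (h₂ : IsPrimitiveIn L₂ Λ) : IsPrimitiveIn (L₁ ⊓ L₂) Λ := by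
  refine ⟨inf_le_left.trans h₁.1,
    Set.ext fun x => ⟨fun hx => ⟨h₁.1 hx.1, Submodule.subset_span hx⟩, ?_⟩⟩
  rintro ⟨hxΛ, hx⟩
  constructor
  · show x ∈ (L₁ : Set (Fin d → ℝ))
    rw [h₁.2]
    exact ⟨hxΛ, Submodule.span_mono (fun _ hy => hy.1) hx⟩
  · show x ∈ (L₂ : Set (Fin d → ℝ))
    rw [h₂.2]
    exact ⟨hxΛ, Submodule.span_mono (fun _ hy => hy.2) hx⟩

theorem exists_isZBasis_finAppend {d n : ℕ} {Λ N L : AddSubgroup (Fin d → ℝ)}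
    {B : Fin n → Fin d → ℝ} (hB : IsZBasis B Λ) (hN : IsPrimitiveIn N Λ) (hNL : N ≤ L)
    (hLΛ : L ≤ Λ) :
    ∃ (m p : ℕ) (w : Fin m → Fin d → ℝ) (a : Fin p → Fin d → ℝ),
      IsZBasis w N ∧ IsZBasis (Fin.append w a) L := by
  set Λ' := AddSubgroup.toIntSubmodule Λ
  have hclosure : ∀ {K : AddSubgroup (Fin d → ℝ)} {s : Set Λ'}, K ≤ Λ →
      Submodule.span ℤ s = (AddSubgroup.toIntSubmodule K).comap Λ'.subtype →
      AddSubgroup.closure (Λ'.subtype '' s) = K := by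
    intro K s hK hs
    apply AddSubgroup.toIntSubmodule.injective
    rw [AddSubgroup.toIntSubmodule_closure, ← Submodule.map_span, hs, Submodule.map_comap_subtype,
      inf_eq_right.mpr (AddSubgroup.toIntSubmodule.monotone hK)]
  have hsat : ∀ x ∈ (AddSubgroup.toIntSubmodule L).comap Λ'.subtype, ∀ c : ℤ, c ≠ 0 →
      c • x ∈ (AddSubgroup.toIntSubmodule N).comap Λ'.subtype →
      x ∈ (AddSubgroup.toIntSubmodule N).comap Λ'.subtype := by
    intro x _ c hc hcx
    have hx : (x : Fin d → ℝ) = (c : ℝ)⁻¹ • ((c • x : Λ') : Fin d → ℝ) := by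
      rw [SetLike.val_smul, ← Int.cast_smul_eq_zsmul ℝ, inv_smul_smul₀ (Int.cast_ne_zero.mpr hc)]
    show (x : Fin d → ℝ) ∈ (N : Set (Fin d → ℝ))
    rw [hN.2]
    refine ⟨x.2, ?_⟩
    rw [hx]
    exact Submodule.smul_mem _ _ (Submodule.subset_span hcx)
  obtain ⟨r, s, e, he, heL, heN⟩ :=
    Submodule.exists_adapted_basis_of_saturated hB.basis (Submodule.comap_mono hNL) hsat
  set f := Λ'.subtype ∘ e
  have hf : IsZBasis f L := ⟨hB.linearIndependent_of_int (fun i => (e i).2)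
    (he.map' _ Λ'.ker_subtype), by rw [Set.range_comp]; exact hclosure hLΛ heL⟩
  refine ⟨r, s, fun i => f (Fin.castAdd s i), fun i => f (Fin.natAdd r i),
    ⟨hf.1.comp _ (Fin.castAdd_injective r s), ?_⟩, by rwa [Fin.append_castAdd_natAdd]⟩
  show AddSubgroup.closure (Set.range (Λ'.subtype ∘ (e ∘ Fin.castAdd s))) = N
  rw [Set.range_comp]
  exact hclosure hN.1 heN

theorem IsZBasis.finAppend_congr_left {d m p : ℕ} {N L : AddSubgroup (Fin d → ℝ)}
    {w w' : Fin m → Fin d → ℝ} {x : Fin p → Fin d → ℝ} (h : IsZBasis (Fin.append w' x) L)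
    (hw' : IsZBasis w' N) (hw : IsZBasis w N) : IsZBasis (Fin.append w x) L :=
  h.of_closure_eq <| by
    rw [AddSubgroup.closure_range_finAppend, hw.2, ← hw'.2, ← AddSubgroup.closure_range_finAppend,
      h.2]

theorem isZBasis_finAppend_sup {d n m p q : ℕ} {Λ L₁ L₂ : AddSubgroup (Fin d → ℝ)}
    {B : Fin n → Fin d → ℝ} {w : Fin m → Fin d → ℝ} {a : Fin p → Fin d → ℝ}
    {b : Fin q → Fin d → ℝ} (hB : IsZBasis B Λ) (hL₁ : L₁ ≤ Λ) (hL₂ : L₂ ≤ Λ)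
    (hw : IsZBasis w (L₁ ⊓ L₂)) (hwa : IsZBasis (Fin.append w a) L₁)
    (hwb : IsZBasis (Fin.append w b) L₂) :
    IsZBasis (Fin.append (Fin.append w a) b) (L₁ ⊔ L₂) := by
  have hclosure : AddSubgroup.closure (Set.range (Fin.append (Fin.append w a) b)) = L₁ ⊔ L₂ := by
    rw [AddSubgroup.closure_range_finAppend, hwa.2, ← hwb.2, AddSubgroup.closure_range_finAppend,
      hw.2, ← sup_assoc, sup_inf_self]
  have hwb' := linearIndependent_finAppend_iff.mp (hwb.1.restrict_scalars' ℤ)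
  have hdisj : Disjoint (Submodule.span ℤ (Set.range (Fin.append w a)))
      (Submodule.span ℤ (Set.range b)) := by
    refine Submodule.disjoint_def.mpr fun x hx₁ hx₂ => Submodule.disjoint_def.mp hwb'.2.2 x ?_ hx₂
    rw [hw.span_int_eq]
    refine ⟨by rwa [hwa.span_int_eq] at hx₁, ?_⟩
    have : Submodule.span ℤ (Set.range b) ≤ AddSubgroup.toIntSubmodule L₂ := by
      rw [← hwb.span_int_eq, Fin.range_append]
      exact Submodule.span_mono Set.subset_union_right
    exact this hx₂
  refine ⟨hB.linearIndependent_of_int (fun i => sup_le hL₁ hL₂ (hclosure ▸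
    AddSubgroup.subset_closure (Set.mem_range_self i))) ?_, hclosure⟩
  exact linearIndependent_finAppend_iff.mpr ⟨hwa.1.restrict_scalars' ℤ, hwb'.2.1, hdisj⟩

theorem stmt_5_general (d : ℕ) :
    ∃ D : ℝ, 0 < D ∧
      ∀ Λ : AddSubgroup (Fin d → ℝ), IsUnimodularLattice Λ →
        ∀ L₁ L₂ : AddSubgroup (Fin d → ℝ), IsPrimitiveIn L₁ Λ → IsPrimitiveIn L₂ Λ →
          latNorm (L₁ ⊓ L₂) * latNorm (L₁ ⊔ L₂) ≤ D * latNorm L₁ * latNorm L₂ := by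
  refine ⟨2 ^ d, by positivity, ?_⟩
  rintro Λ ⟨B, -, hB⟩ L₁ L₂ h₁ h₂
  obtain ⟨m, p, w, a, hw, hwa⟩ := exists_isZBasis_finAppend hB (h₁.inf h₂) inf_le_left h₁.1
  obtain ⟨m', q, w', b, hw', hw'b⟩ := exists_isZBasis_finAppend hB (h₁.inf h₂) inf_le_right h₂.1
  obtain rfl := hw'.card_eq hw
  have hwb := hw'b.finAppend_congr_left hw' hw
  rw [latNorm_eq hw, latNorm_eq hwa, latNorm_eq hwb,
    latNorm_eq (isZBasis_finAppend_sup hB h₁.1 h₂.1 hw hwa hwb)]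
  exact wedgeNorm_mul_wedgeNorm_append_le w a b hwa.1

/-- Submodularity of lattice covolumes (EMM Lemma 5.6, sup-norm version): there is `D > 0`,
depending only on `d`, such that for every unimodular lattice `Λ ⊆ ℝ^d` and all primitive
subgroups `Λ₁, Λ₂` of `Λ`, `‖Λ₁ ∩ Λ₂‖ ‖Λ₁ + Λ₂‖ ≤ D ‖Λ₁‖ ‖Λ₂‖`. -/
theorem stmt_5 (d : ℕ) (hd : 0 < d) :
    ∃ D : ℝ, 0 < D ∧
      ∀ Λ : AddSubgroup (Fin d → ℝ), IsUnimodularLattice Λ →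
        ∀ L₁ L₂ : AddSubgroup (Fin d → ℝ), IsPrimitiveIn L₁ Λ → IsPrimitiveIn L₂ Λ →
          latNorm (L₁ ⊓ L₂) * latNorm (L₁ ⊔ L₂) ≤ D * latNorm L₁ * latNorm L₂ :=
  stmt_5_general d
end

section
/- Let d ≥ 2 and let η_0, η_1, …, η_d with 1/η_0 = 1/η_d = 0 and η_i > 0 for 1 ≤ i ≤ d−1 satisfy (1/η_{i−j}) + (1/η_{i+j}) < 2/η_i for all 1 ≤ i ≤ d−1 and 1 ≤ j ≤ min{i, d−i}. Define α = min over all such (i,j) of 1 − (η_i/2)(1/η_{i−j} + 1/η_{i+j}) > 0. For ε ∈ (0,1) and positive reals φ_1, …, φ_{d−1}, set f = ε^{−1} + Σ_{l=1}^{d−1} φ_l^{η_l}. Then for all 1 ≤ l ≤ d−1 and 1 ≤ j ≤ min{l, d−l}, (φ_{l−j} φ_{l+j})^{η_l/2} ≤ ε^α f, where φ_0 = φ_d := 1. -/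
/-!
Each `φ_k` is at most `f ^ (1/η_k)`, because `φ_k ^ η_k` is one of the summands of `f` (and
`φ_0 = φ_d = 1 = f ^ 0`). Hence `(φ_{l-j} φ_{l+j}) ^ (η_l/2) ≤ f ^ s` with
`s = (η_l/2)(1/η_{l-j} + 1/η_{l+j}) ≤ 1 - α`, and since `f ≥ ε⁻¹` the surplus factor
`f ^ (s - 1)` is at most `ε ^ (1 - s) ≤ ε ^ α`.
-/

/-- The reciprocals `1/η_i` with the convention `1/η_0 = 1/η_d = 0`. -/
noncomputable def recEta (d : ℕ) (η : ℕ → ℝ) (i : ℕ) : ℝ :=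
  if i = 0 ∨ i = d then 0 else (η i)⁻¹

open Real Finset

lemma rpow_le_rpow_mul_self_of_inv_le {ε f s α : ℝ} (hε0 : 0 < ε) (hε1 : ε ≤ 1)
    (hεf : ε⁻¹ ≤ f) (hα : 0 ≤ α) (hs : α ≤ 1 - s) : f ^ s ≤ ε ^ α * f := by
  have hf0 : 0 < f := (inv_pos.2 hε0).trans_le hεf
  calc f ^ s = f ^ (s - 1) * f := by rw [rpow_sub_one hf0.ne', div_mul_cancel₀ _ hf0.ne']
    _ ≤ ε⁻¹ ^ (s - 1) * f :=
      mul_le_mul_of_nonneg_right (rpow_le_rpow_of_nonpos (inv_pos.2 hε0) hεf (by linarith))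
        hf0.le
    _ = ε ^ (1 - s) * f := by rw [inv_rpow hε0.le, ← rpow_neg hε0.le, neg_sub]
    _ ≤ ε ^ α * f :=
      mul_le_mul_of_nonneg_right (rpow_le_rpow_of_exponent_ge hε0 hε1 hs) hf0.le

lemma mul_rpow_le_rpow_of_le_rpow {a b f r r' t : ℝ} (hf : 0 < f) (ha : 0 ≤ a) (hb : 0 ≤ b)
    (haf : a ≤ f ^ r) (hbf : b ≤ f ^ r') (ht : 0 ≤ t) : (a * b) ^ t ≤ f ^ (t * (r + r')) := by
  calc (a * b) ^ t ≤ (f ^ r * f ^ r') ^ t := by gcongr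
    _ = f ^ (t * (r + r')) := by rw [← rpow_add hf, ← rpow_mul hf.le, mul_comm]

lemma le_rpow_recEta {d : ℕ} {η φ : ℕ → ℝ} {f : ℝ}
    (hηpos : ∀ i, 1 ≤ i → i ≤ d - 1 → 0 < η i)
    (hφpos : ∀ i, 1 ≤ i → i ≤ d - 1 → 0 < φ i) (hφ0 : φ 0 = 1) (hφd : φ d = 1)
    (hf : 0 ≤ f) (hφf : ∀ i, 1 ≤ i → i ≤ d - 1 → φ i ^ η i ≤ f) {k : ℕ} (hk : k ≤ d) :
    0 ≤ φ k ∧ φ k ≤ f ^ recEta d η k := by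
  by_cases hbd : k = 0 ∨ k = d
  · have hφk : φ k = 1 := by rcases hbd with rfl | rfl <;> assumption
    simp [recEta, hbd, hφk]
  · have hk1 : 1 ≤ k := by omega
    have hkd : k ≤ d - 1 := by omega
    have hφk := (hφpos k hk1 hkd).le
    rw [recEta, if_neg hbd]
    exact ⟨hφk, (le_rpow_inv_iff_of_pos hφk hf (hηpos k hk1 hkd)).2 (hφf k hk1 hkd)⟩

theorem stmt_11_general (d : ℕ) (η : ℕ → ℝ)
    (hηpos : ∀ i, 1 ≤ i → i ≤ d - 1 → 0 < η i)
    (α : ℝ) (hα : 0 < α)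
    (hαmin : ∀ i j, 1 ≤ i → i ≤ d - 1 → 1 ≤ j → j ≤ min i (d - i) →
      α ≤ 1 - η i / 2 * (recEta d η (i - j) + recEta d η (i + j)))
    (ε : ℝ) (hε0 : 0 < ε) (hε1 : ε < 1)
    (φ : ℕ → ℝ) (hφpos : ∀ i, 1 ≤ i → i ≤ d - 1 → 0 < φ i)
    (hφ0 : φ 0 = 1) (hφd : φ d = 1)
    (f : ℝ) (hf : f = ε⁻¹ + ∑ i ∈ Finset.Icc 1 (d - 1), φ i ^ η i) :
    ∀ l j, 1 ≤ l → l ≤ d - 1 → 1 ≤ j → j ≤ min l (d - l) →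
      (φ (l - j) * φ (l + j)) ^ (η l / 2) ≤ ε ^ α * f := by
  intro l j hl1 hl2 hj1 hj2
  have hterm_nonneg : ∀ i ∈ Icc 1 (d - 1), 0 ≤ φ i ^ η i := fun i hi =>
    rpow_nonneg (hφpos i (mem_Icc.1 hi).1 (mem_Icc.1 hi).2).le _
  have hεf : ε⁻¹ ≤ f := by rw [hf]; linarith [sum_nonneg hterm_nonneg]
  have hf0 : 0 < f := (inv_pos.2 hε0).trans_le hεf
  have hφf : ∀ i, 1 ≤ i → i ≤ d - 1 → φ i ^ η i ≤ f := fun i hi1 hi2 => by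
    rw [hf]
    exact le_add_of_nonneg_of_le (inv_pos.2 hε0).le
      (single_le_sum hterm_nonneg (mem_Icc.2 ⟨hi1, hi2⟩))
  obtain ⟨ha0, ha⟩ := le_rpow_recEta hηpos hφpos hφ0 hφd hf0.le hφf (k := l - j) (by omega)
  obtain ⟨hb0, hb⟩ := le_rpow_recEta hηpos hφpos hφ0 hφd hf0.le hφf (k := l + j) (by omega)
  calc (φ (l - j) * φ (l + j)) ^ (η l / 2)
      ≤ f ^ (η l / 2 * (recEta d η (l - j) + recEta d η (l + j))) :=
        mul_rpow_le_rpow_of_le_rpow hf0 ha0 hb0 ha hb (by linarith [hηpos l hl1 hl2])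
    _ ≤ ε ^ α * f :=
        rpow_le_rpow_mul_self_of_inv_le hε0 hε1.le hεf hα.le (hαmin l j hl1 hl2 hj1 hj2)

/-- Key interpolation inequality for the height function: if the exponents `η_i` satisfy the
strict convexity condition and `α` is the associated positive exponent, then for
`f = ε⁻¹ + ∑ φ_l^{η_l}` one has `(φ_{l-j} φ_{l+j})^{η_l/2} ≤ ε^α f`. -/
theorem stmt_11 (d : ℕ) (hd : 2 ≤ d) (η : ℕ → ℝ)
    (hηpos : ∀ i, 1 ≤ i → i ≤ d - 1 → 0 < η i)
    (hconv : ∀ i j, 1 ≤ i → i ≤ d - 1 → 1 ≤ j → j ≤ min i (d - i) →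
      recEta d η (i - j) + recEta d η (i + j) < 2 / η i)
    (α : ℝ) (hα : 0 < α)
    (hαmin : ∀ i j, 1 ≤ i → i ≤ d - 1 → 1 ≤ j → j ≤ min i (d - i) →
      α ≤ 1 - η i / 2 * (recEta d η (i - j) + recEta d η (i + j)))
    (ε : ℝ) (hε0 : 0 < ε) (hε1 : ε < 1)
    (φ : ℕ → ℝ) (hφpos : ∀ i, 1 ≤ i → i ≤ d - 1 → 0 < φ i)
    (hφ0 : φ 0 = 1) (hφd : φ d = 1)
    (f : ℝ) (hf : f = ε⁻¹ + ∑ i ∈ Finset.Icc 1 (d - 1), φ i ^ η i) :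
    ∀ l j, 1 ≤ l → l ≤ d - 1 → 1 ≤ j → j ≤ min l (d - l) →
      (φ (l - j) * φ (l + j)) ^ (η l / 2) ≤ ε ^ α * f :=
  stmt_11_general d η hηpos α hα hαmin ε hε0 hε1 φ hφpos hφ0 hφd f hf
end

section
/- Let Y be a locally compact second countable metric space with a continuous action of a group G containing a one-parameter flow (g_{e^t})_{t≥0}, let Y' ⊆ Y be a closed G-invariant subset, let y ∈ Y \ Y', and let 0 < q < p ≤ 1. Suppose x satisfies: for every compact K ⊆ Y \ Y', liminf_{T→∞} (1/T)∫_0^T 1_{Y∖K}(g_{e^t} u(x) y) dt ≥ p. Then for every compact K ⊆ Y \ Y' and every t > 1, there exists N such that for all integers M > N, (1/M)·#{l ∈ {1,…,M} : g_{t^l} u(x) y ∉ K} ≥ q. -/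
/-!
Let `L = log t` and let `K^t` be the set of points `Φ σ k` with `σ ∈ [-L, 0]` and `k ∈ K`: it is
compact and still disjoint from the invariant set `Y'`. If `Φ s z ∉ K^t` for some
`s ∈ ((l - 1) L, l L]`, then `Φ (l L) z ∉ K`. Hence the time the orbit spends outside `K^t`
up to `M L` is at most `L` times the number of `l ≤ M` with `Φ (l L) z ∉ K`, and the
continuous-time liminf bound for `K^t` turns into the discrete bound for `K`.
-/

open MeasureTheory Set Filter Classical

section Flow

variable {Y : Type*} (Φ : ℝ → Y → Y)

def flowThickening (L : ℝ) (K : Set Y) : Set Y :=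
  (fun p : ℝ × Y => Φ p.1 p.2) '' (Icc (-L) 0 ×ˢ K)

variable {Φ}

theorem IsCompact.flowThickening [TopologicalSpace Y]
    (hcont : Continuous fun p : ℝ × Y => Φ p.1 p.2) (L : ℝ) {K : Set Y} (hK : IsCompact K) :
    IsCompact (flowThickening Φ L K) :=
  (isCompact_Icc.prod hK).image hcont

theorem flowThickening_subset_compl (hflow0 : ∀ y, Φ 0 y = y)
    (hflow : ∀ s s' y, Φ s (Φ s' y) = Φ (s + s') y) {Y' : Set Y}
    (hinv : ∀ s y, y ∈ Y' → Φ s y ∈ Y') (L : ℝ) {K : Set Y} (hKY : K ⊆ Y'ᶜ) :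
    flowThickening Φ L K ⊆ Y'ᶜ := by
  rintro _ ⟨⟨σ, k⟩, ⟨-, hk⟩, rfl⟩ hσk
  apply hKY hk
  simpa only [hflow, neg_add_cancel, hflow0] using hinv (-σ) _ hσk

theorem flow_mem_flowThickening (hflow : ∀ s s' y, Φ s (Φ s' y) = Φ (s + s') y)
    {L a s : ℝ} {K : Set Y} {z : Y} (ha : Φ a z ∈ K) (hs : s ∈ Icc (a - L) a) :
    Φ s z ∈ flowThickening Φ L K :=
  ⟨(s - a, Φ a z), ⟨⟨by linarith [hs.1], by linarith [hs.2]⟩, ha⟩, by simp [hflow]⟩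

end Flow

theorem exists_mem_Icc_mem_Ioc_mul {L s : ℝ} (hL : 0 < L) {M : ℕ} (hs : s ∈ Ioc 0 (M * L)) :
    ∃ l ∈ Finset.Icc 1 M, s ∈ Ioc (((l : ℝ) - 1) * L) (l * L) := by
  have hsL : 0 < s / L := div_pos hs.1 hL
  refine ⟨⌈s / L⌉₊, Finset.mem_Icc.2 ⟨Nat.one_le_ceil_iff.2 hsL, ?_⟩, ?_, ?_⟩
  · exact Nat.ceil_le.2 ((div_le_iff₀ hL).2 hs.2)
  · have := Nat.ceil_lt_add_one hsL.le
    rw [← lt_div_iff₀ hL]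
    linarith
  · rw [← div_le_iff₀ hL]
    exact Nat.le_ceil _

theorem setIntegral_indicator_one_le_card_mul {L : ℝ} (hL : 0 ≤ L) {I A : Set ℝ}
    (hI : MeasurableSet I) (F : Finset ℕ) (hIA : I ∩ A ⊆ ⋃ l ∈ F, Ioc (((l : ℝ) - 1) * L) (l * L)) :
    ∫ s in I, A.indicator 1 s ≤ F.card * L := by
  set U := ⋃ l ∈ F, Ioc (((l : ℝ) - 1) * L) (l * L)
  have hU : MeasurableSet U := Finset.measurableSet_biUnion _ fun _ _ => measurableSet_Ioc
  have hUfin : volume U ≠ ⊤ :=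
    (measure_biUnion_lt_top F.finite_toSet fun _ _ => measure_Ioc_lt_top).ne
  have hA_le_U : ∀ s ∈ I, A.indicator (1 : ℝ → ℝ) s ≤ U.indicator 1 s := by
    intro s hsI
    by_cases hsA : s ∈ A
    · simp [hsA, hIA ⟨hsI, hsA⟩]
    · simp [hsA, indicator_nonneg]
  calc ∫ s in I, A.indicator 1 s
      ≤ ∫ s in I, U.indicator 1 s :=
        integral_mono_of_nonneg (ae_of_all _ fun _ => indicator_nonneg (by simp) _)
          ((integrableOn_const hUfin).integrable_indicator hU).restrict
          (ae_restrict_of_forall_mem hI hA_le_U)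
    _ = volume.real (U ∩ I) := by rw [integral_indicator_one hU, measureReal_restrict_apply hU]
    _ ≤ volume.real U := measureReal_mono inter_subset_left hUfin
    _ ≤ ∑ l ∈ F, volume.real (Ioc (((l : ℝ) - 1) * L) (l * L)) :=
        measureReal_biUnion_finset_le F _
    _ = F.card * L := by
        rw [Finset.sum_congr rfl fun l _ => Real.volume_real_Ioc_of_le (by nlinarith)]
        simp [← sub_mul]

theorem setIntegral_indicator_compl_flowThickening_le {Y : Type*} {Φ : ℝ → Y → Y}
    (hflow : ∀ s s' y, Φ s (Φ s' y) = Φ (s + s') y) {L : ℝ} (hL : 0 < L) (K : Set Y) (z : Y)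
    (M : ℕ) :
    ∫ s in Ioc 0 (M * L), (flowThickening Φ L K)ᶜ.indicator (fun _ => (1 : ℝ)) (Φ s z) ≤
      ((Finset.Icc 1 M).filter fun l : ℕ => Φ (l * L) z ∉ K).card * L := by
  refine setIntegral_indicator_one_le_card_mul hL.le measurableSet_Ioc _ ?_
  rintro s ⟨hs, hsK⟩
  obtain ⟨l, hlM, hsl⟩ := exists_mem_Icc_mem_Ioc_mul hL hs
  refine mem_biUnion (Finset.mem_filter.2 ⟨hlM, fun hlK => hsK ?_⟩) hsl
  exact flow_mem_flowThickening hflow hlK ⟨by linarith [hsl.1], hsl.2⟩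

theorem stmt_12_general {Y : Type*} [MetricSpace Y]
    (Φ : ℝ → Y → Y) (hcont : Continuous fun p : ℝ × Y => Φ p.1 p.2)
    (hflow0 : ∀ y, Φ 0 y = y)
    (hflow : ∀ s s' y, Φ s (Φ s' y) = Φ (s + s') y)
    (Y' : Set Y) (hinv : ∀ s y, y ∈ Y' → Φ s y ∈ Y')
    (p q : ℝ) (hqp : q < p)
    (z : Y)
    (hdiv : ∀ K : Set Y, IsCompact K → K ⊆ Y'ᶜ →
      p ≤ Filter.liminf
        (fun T : ℝ => (∫ s in Set.Ioc (0 : ℝ) T, Set.indicator Kᶜ (fun _ => (1 : ℝ)) (Φ s z)) / T)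
        Filter.atTop) :
    ∀ K : Set Y, IsCompact K → K ⊆ Y'ᶜ → ∀ t : ℝ, 1 < t →
      ∃ N : ℕ, ∀ M : ℕ, N < M →
        q ≤ (((Finset.Icc 1 M).filter fun l : ℕ => Φ (l * Real.log t) z ∉ K).card : ℝ) / M := by
  intro K hK hKY t ht
  set L := Real.log t
  have hL : 0 < L := Real.log_pos ht
  set Kt := flowThickening Φ L K
  have hbdd : IsBoundedUnder (· ≥ ·) atTop fun T : ℝ =>
      (∫ s in Ioc 0 T, Ktᶜ.indicator (fun _ => (1 : ℝ)) (Φ s z)) / T :=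
    isBoundedUnder_of_eventually_ge <| (eventually_ge_atTop 0).mono fun T hT =>
      div_nonneg (integral_nonneg fun _ => indicator_nonneg (fun _ _ => zero_le_one) _) hT
  obtain ⟨T₀, hT₀⟩ := eventually_atTop.1 <| eventually_lt_of_lt_liminf
    (hqp.trans_le (hdiv Kt (hK.flowThickening hcont L)
      (flowThickening_subset_compl hflow0 hflow hinv L hKY))) hbdd
  refine ⟨⌈T₀ / L⌉₊, fun M hM => ?_⟩
  have hM0 : (0 : ℝ) < M := by exact_mod_cast (Nat.zero_le _).trans_lt hM
  have hT₀M : T₀ ≤ M * L :=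
    (div_le_iff₀ hL).1 ((Nat.le_ceil _).trans (by exact_mod_cast hM.le))
  calc q ≤ (∫ s in Ioc 0 (M * L), Ktᶜ.indicator (fun _ => (1 : ℝ)) (Φ s z)) / (M * L) :=
        (hT₀ _ hT₀M).le
    _ ≤ (((Finset.Icc 1 M).filter fun l : ℕ => Φ (l * L) z ∉ K).card * L) / (M * L) := by
        gcongr
        exact setIntegral_indicator_compl_flowThickening_le hflow hL K z M
    _ = _ := mul_div_mul_right _ _ hL.ne'

/-- Discretization of divergence on average: if the forward flow orbit of `z` spends
asymptotic proportion at least `p` of (continuous) time outside every compact subset of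
`Y \ Y'`, then for every `q < p`, every compact `K ⊆ Y \ Y'` and every time step `t > 1`,
eventually at least a proportion `q` of the discrete times `l = 1, …, M` satisfy
`g_{t^l} z ∉ K`. -/
theorem stmt_12 {Y : Type*} [MetricSpace Y] [LocallyCompactSpace Y]
    [SecondCountableTopology Y]
    (Φ : ℝ → Y → Y) (hcont : Continuous fun p : ℝ × Y => Φ p.1 p.2)
    (hflow0 : ∀ y, Φ 0 y = y)
    (hflow : ∀ s s' y, Φ s (Φ s' y) = Φ (s + s') y)
    (Y' : Set Y) (hY' : IsClosed Y') (hinv : ∀ s y, y ∈ Y' → Φ s y ∈ Y')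
    (p q : ℝ) (hq0 : 0 < q) (hqp : q < p) (hp1 : p ≤ 1)
    (z : Y) (hz : z ∉ Y')
    (hdiv : ∀ K : Set Y, IsCompact K → K ⊆ Y'ᶜ →
      p ≤ Filter.liminf
        (fun T : ℝ => (∫ s in Set.Ioc (0 : ℝ) T, Set.indicator Kᶜ (fun _ => (1 : ℝ)) (Φ s z)) / T)
        Filter.atTop) :
    ∀ K : Set Y, IsCompact K → K ⊆ Y'ᶜ → ∀ t : ℝ, 1 < t →
      ∃ N : ℕ, ∀ M : ℕ, N < M →
        q ≤ (((Finset.Icc 1 M).filter fun l : ℕ => Φ (l * Real.log t) z ∉ K).card : ℝ) / M :=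
  stmt_12_general Φ hcont hflow0 hflow Y' hinv p q hqp z hdiv
end

section
/- If θ ∈ M_{m×n}(ℝ) is (a,b)-singular, then for the weighted diagonal flow g_t and u(θ) = (I_m θ; 0 I_n), the shortest nonzero vector of the lattice g_t u(θ) ℤ^{m+n} tends to 0 in sup norm as t → ∞; more precisely, for every δ > 0 there exists T_δ such that for all t > T_δ, the lattice g_t u(θ) ℤ^{m+n} contains a nonzero vector of sup norm at most δ^{a_m b_n/(a_m + b_n)}. -/
/-!
Feed the singularity of `θ` with `ε = ρ := min δ 1` at the rescaled time `T = ρ^{a_m/(a_m+b_n)} t`.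
Then the expanded coordinates of `g_t u(θ) (p, q)` are at most `ρ^{a_i b_n/(a_m+b_n)}` and the
contracted ones at most `ρ^{a_m b_j/(a_m+b_n)}`; since `ρ ≤ 1`, `a_i ≥ a_m` and `b_j ≥ b_n`, both are
at most `ρ^{a_m b_n/(a_m+b_n)} ≤ δ^{a_m b_n/(a_m+b_n)}`.
-/

open Real

lemma abs_le_rpow_of_abs_rpow_inv_le {x y s : ℝ} (hs : 0 < s) (h : |x| ^ s⁻¹ ≤ y) : |x| ≤ y ^ s := by
  have h' := rpow_le_rpow (rpow_nonneg (abs_nonneg x) _) h hs.le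
  rwa [← rpow_mul (abs_nonneg x), inv_mul_cancel₀ hs.ne', rpow_one] at h'

lemma abs_rpow_mul_le_of_abs_rpow_inv_le {t x r s : ℝ} (ht : 0 < t) (hs : 0 < s) (hr : 0 ≤ r)
    (h : |x| ^ s⁻¹ ≤ r / t) : |t ^ s * x| ≤ r ^ s :=
  calc |t ^ s * x| = t ^ s * |x| := by rw [abs_mul, abs_of_pos (rpow_pos_of_pos ht s)]
    _ ≤ t ^ s * (r / t) ^ s := by
      gcongr; exact abs_le_rpow_of_abs_rpow_inv_le hs h
    _ = r ^ s := by rw [← mul_rpow ht.le (div_nonneg hr ht.le), mul_div_cancel₀ _ ht.ne']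

lemma abs_rpow_neg_mul_le_of_abs_rpow_inv_le {t y r s : ℝ} (ht : 0 < t) (hs : 0 < s)
    (hr : 0 ≤ r) (h : |y| ^ s⁻¹ ≤ r * t) : |t ^ (-s) * y| ≤ r ^ s := by
  have h' := abs_rpow_mul_le_of_abs_rpow_inv_le (inv_pos.2 ht) hs hr (by rwa [div_inv_eq_mul])
  rwa [inv_rpow ht.le, ← rpow_neg ht.le] at h'

section Rescaling

variable {ρ t α β s : ℝ}

lemma abs_rpow_mul_le_of_rescaled_approx {x : ℝ} (hρ₀ : 0 < ρ) (hρ₁ : ρ ≤ 1) (hα : 0 < α)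
    (hαs : α ≤ s) (hβ : 0 < β) (ht : 0 < t)
    (h : |x| ^ s⁻¹ ≤ ρ / (ρ ^ (α / (α + β)) * t)) :
    |t ^ s * x| ≤ ρ ^ (α * β / (α + β)) := by
  have hρc : ρ / ρ ^ (α / (α + β)) = ρ ^ (β / (α + β)) := by
    rw [show β / (α + β) = 1 - α / (α + β) by field_simp; ring, rpow_sub hρ₀, rpow_one]
  calc |t ^ s * x| ≤ (ρ ^ (β / (α + β))) ^ s := by
        refine abs_rpow_mul_le_of_abs_rpow_inv_le ht (hα.trans_le hαs) (by positivity) ?_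
        rwa [← hρc, div_div]
    _ = ρ ^ (β / (α + β) * s) := by rw [← rpow_mul hρ₀.le]
    _ ≤ ρ ^ (β / (α + β) * α) :=
        rpow_le_rpow_of_exponent_ge hρ₀ hρ₁ (by gcongr)
    _ = ρ ^ (α * β / (α + β)) := by ring_nf

lemma abs_rpow_neg_mul_le_of_rescaled_approx {y : ℝ} (hρ₀ : 0 < ρ) (hρ₁ : ρ ≤ 1) (hα : 0 < α)
    (hβ : 0 < β) (hβs : β ≤ s) (ht : 0 < t)
    (h : |y| ^ s⁻¹ ≤ ρ ^ (α / (α + β)) * t) :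
    |t ^ (-s) * y| ≤ ρ ^ (α * β / (α + β)) :=
  calc |t ^ (-s) * y| ≤ (ρ ^ (α / (α + β))) ^ s :=
        abs_rpow_neg_mul_le_of_abs_rpow_inv_le ht (hβ.trans_le hβs) (by positivity) h
    _ = ρ ^ (α / (α + β) * s) := by rw [← rpow_mul hρ₀.le]
    _ ≤ ρ ^ (α / (α + β) * β) :=
        rpow_le_rpow_of_exponent_ge hρ₀ hρ₁ (by gcongr)
    _ = ρ ^ (α * β / (α + β)) := by ring_nf

end Rescaling

theorem stmt_13_general (m n : ℕ) (hm : 0 < m) (hn : 0 < n)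
    (a : Fin m → ℝ) (b : Fin n → ℝ)
    (ha : Antitone a) (hb : Antitone b)
    (hapos : ∀ i, 0 < a i) (hbpos : ∀ j, 0 < b j)
    (am bn : ℝ)
    (ham : am = a ⟨m - 1, Nat.sub_lt hm Nat.one_pos⟩)
    (hbn : bn = b ⟨n - 1, Nat.sub_lt hn Nat.one_pos⟩)
    (θ : Fin m → Fin n → ℝ)
    (hsing : ∀ ε : ℝ, 0 < ε → ∃ Tε : ℝ, ∀ T : ℝ, Tε < T →
      ∃ (p : Fin m → ℤ) (q : Fin n → ℤ), q ≠ 0 ∧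
        (∀ i, |(p i : ℝ) + ∑ j, θ i j * (q j : ℝ)| ^ (a i)⁻¹ ≤ ε / T) ∧
        (∀ j, |(q j : ℝ)| ^ (b j)⁻¹ ≤ T)) :
    ∀ δ : ℝ, 0 < δ → ∃ Tδ : ℝ, ∀ t : ℝ, Tδ < t →
      ∃ (p : Fin m → ℤ) (q : Fin n → ℤ), ¬(p = 0 ∧ q = 0) ∧
        (∀ i, |t ^ a i * ((p i : ℝ) + ∑ j, θ i j * (q j : ℝ))|
            ≤ δ ^ (am * bn / (am + bn))) ∧
        (∀ j, |t ^ (-b j) * (q j : ℝ)| ≤ δ ^ (am * bn / (am + bn))) := by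
  intro δ hδ
  have ham₀ : 0 < am := ham ▸ hapos _
  have hbn₀ : 0 < bn := hbn ▸ hbpos _
  set ρ := min δ 1
  have hρ₀ : 0 < ρ := lt_min hδ one_pos
  have hρδ : ρ ^ (am * bn / (am + bn)) ≤ δ ^ (am * bn / (am + bn)) :=
    rpow_le_rpow hρ₀.le (min_le_left _ _) (by positivity)
  set c := ρ ^ (am / (am + bn))
  have hc : 0 < c := rpow_pos_of_pos hρ₀ _
  obtain ⟨Tε, hTε⟩ := hsing ρ hρ₀
  refine ⟨max 0 (Tε / c), fun t ht => ?_⟩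
  have ht₀ : 0 < t := (le_max_left _ _).trans_lt ht
  obtain ⟨p, q, hq, hp_small, hq_small⟩ :=
    hTε (c * t) ((div_lt_iff₀' hc).1 ((le_max_right _ _).trans_lt ht))
  refine ⟨p, q, fun h => hq h.2, fun i => ?_, fun j => ?_⟩
  · exact (abs_rpow_mul_le_of_rescaled_approx hρ₀ (min_le_right _ _) ham₀
      (ham ▸ ha (Nat.le_sub_one_of_lt i.isLt)) hbn₀ ht₀ (hp_small i)).trans hρδ
  · exact (abs_rpow_neg_mul_le_of_rescaled_approx hρ₀ (min_le_right _ _) ham₀ hbn₀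
      (hbn ▸ hb (Nat.le_sub_one_of_lt j.isLt)) ht₀ (hq_small j)).trans hρδ

/-- If `θ` is `(a,b)`-singular, then for every `δ > 0` there is `T_δ` such that for all
`t > T_δ` the lattice `g_t u(θ) ℤ^{m+n}` contains a nonzero vector of sup norm at most
`δ^{a_m b_n / (a_m + b_n)}`. -/
theorem stmt_13 (m n : ℕ) (hm : 0 < m) (hn : 0 < n)
    (a : Fin m → ℝ) (b : Fin n → ℝ)
    (ha : Antitone a) (hb : Antitone b)
    (hapos : ∀ i, 0 < a i) (hbpos : ∀ j, 0 < b j)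
    (hasum : ∑ i, a i = 1) (hbsum : ∑ j, b j = 1)
    (am bn : ℝ)
    (ham : am = a ⟨m - 1, Nat.sub_lt hm Nat.one_pos⟩)
    (hbn : bn = b ⟨n - 1, Nat.sub_lt hn Nat.one_pos⟩)
    (θ : Fin m → Fin n → ℝ)
    (hsing : ∀ ε : ℝ, 0 < ε → ∃ Tε : ℝ, ∀ T : ℝ, Tε < T →
      ∃ (p : Fin m → ℤ) (q : Fin n → ℤ), q ≠ 0 ∧
        (∀ i, |(p i : ℝ) + ∑ j, θ i j * (q j : ℝ)| ^ (a i)⁻¹ ≤ ε / T) ∧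
        (∀ j, |(q j : ℝ)| ^ (b j)⁻¹ ≤ T)) :
    ∀ δ : ℝ, 0 < δ → ∃ Tδ : ℝ, ∀ t : ℝ, Tδ < t →
      ∃ (p : Fin m → ℤ) (q : Fin n → ℤ), ¬(p = 0 ∧ q = 0) ∧
        (∀ i, |t ^ a i * ((p i : ℝ) + ∑ j, θ i j * (q j : ℝ))|
            ≤ δ ^ (am * bn / (am + bn))) ∧
        (∀ j, |t ^ (-b j) * (q j : ℝ)| ≤ δ ^ (am * bn / (am + bn))) :=
  stmt_13_general m n hm hn a b ha hb hapos hbpos am bn ham hbn θ hsing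
end

section
/- Let 0 < ω < ω′ and suppose θ ∈ M_{m×n}(ℝ) satisfies: there is T_0 such that for all T > T_0 there exist (p,q) ∈ ℤ^m × (ℤ^n ∖ {0}) with max_i |p_i + (θq)_i|^{1/a_i} ≤ T^{−(1+ω′)} and max_j |q_j|^{1/b_j} ≤ T. Then there exists T_θ such that for all τ > T_θ, the lattice g_τ u(θ) ℤ^{m+n} contains a nonzero vector of sup norm at most τ^{−a_m b_n ω/(a_m + b_n + a_m ω)}. -/
/-! The singular approximations at height `T` are pushed forward by `g_τ` with
`τ = T ^ (1 + a_m ω / (a_m + b_n))`, which makes every coordinate a power of `T`. The expanded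
coordinates then carry the exponent `a_i (a_m ω / (a_m + b_n) - ω') ≤ -a_i b_n ω / (a_m + b_n)`
and the contracted ones `-b_j a_m ω / (a_m + b_n)`; both are at most
`-a_m b_n ω / (a_m + b_n)`, which is the target exponent measured in powers of `T`. -/

open Filter

lemma abs_le_rpow_mul_of_abs_rpow_inv_le {x T c e : ℝ} (hT : 0 ≤ T) (he : 0 < e)
    (h : |x| ^ e⁻¹ ≤ T ^ c) : |x| ≤ T ^ (c * e) := by
  rw [Real.rpow_mul hT]
  exact (Real.rpow_inv_le_iff_of_pos (abs_nonneg x) (by positivity) he).1 h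

lemma abs_rpow_rpow_mul_le {T s e c k x : ℝ} (hT : 1 ≤ T) (hx : |x| ≤ T ^ c)
    (hexp : s * e + c ≤ s * k) : |(T ^ s) ^ e * x| ≤ (T ^ s) ^ k := by
  have hT0 : 0 ≤ T := by linarith
  calc |(T ^ s) ^ e * x| = T ^ (s * e) * |x| := by
        rw [abs_mul, abs_of_nonneg (by positivity), ← Real.rpow_mul hT0]
    _ ≤ T ^ (s * e) * T ^ c := by gcongr
    _ = T ^ (s * e + c) := (Real.rpow_add (by positivity) _ _).symm
    _ ≤ T ^ (s * k) := Real.rpow_le_rpow_of_exponent_le hT hexp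
    _ = (T ^ s) ^ k := Real.rpow_mul hT0 _ _

section Exponents

variable {am bn ω : ℝ}

lemma expanding_exponent_le {ai ω' : ℝ} (ham : 0 < am) (hbn : 0 < bn) (hai : am ≤ ai)
    (hω : 0 < ω) (hωω' : ω < ω') :
    (am + bn + am * ω) / (am + bn) * ai + -(1 + ω') * ai
      ≤ (am + bn + am * ω) / (am + bn) * -(am * bn * ω / (am + bn + am * ω)) := by
  have hS : 0 < am + bn + am * ω := by positivity
  field_simp
  have hX : bn * ω < (am + bn) * ω' - am * ω := by nlinarith
  nlinarith [mul_nonneg (sub_nonneg.2 hai) (hX.trans' (by positivity)).le,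
    mul_le_mul_of_nonneg_left hX.le ham.le]

lemma contracting_exponent_le {bj : ℝ} (ham : 0 < am) (hbj : bn ≤ bj) (hω : 0 < ω)
    (hD : 0 < am + bn) :
    (am + bn + am * ω) / (am + bn) * -bj + bj
      ≤ (am + bn + am * ω) / (am + bn) * -(am * bn * ω / (am + bn + am * ω)) := by
  have hS : 0 < am + bn + am * ω := by positivity
  field_simp
  nlinarith [mul_le_mul_of_nonneg_left hbj (mul_pos ham hω).le]

end Exponents

theorem stmt_14_general (m n : ℕ) (hm : 0 < m) (hn : 0 < n)
    (a : Fin m → ℝ) (b : Fin n → ℝ)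
    (ha : Antitone a) (hb : Antitone b)
    (hapos : ∀ i, 0 < a i) (hbpos : ∀ j, 0 < b j)
    (am bn : ℝ)
    (ham : am = a ⟨m - 1, Nat.sub_lt hm Nat.one_pos⟩)
    (hbn : bn = b ⟨n - 1, Nat.sub_lt hn Nat.one_pos⟩)
    (ω ω' : ℝ) (hω : 0 < ω) (hωω' : ω < ω')
    (θ : Fin m → Fin n → ℝ)
    (hsing : ∃ T₀ : ℝ, ∀ T : ℝ, T₀ < T →
      ∃ (p : Fin m → ℤ) (q : Fin n → ℤ), q ≠ 0 ∧
        (∀ i, |(p i : ℝ) + ∑ j, θ i j * (q j : ℝ)| ^ (a i)⁻¹ ≤ T ^ (-(1 + ω'))) ∧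
        (∀ j, |(q j : ℝ)| ^ (b j)⁻¹ ≤ T)) :
    ∃ Tθ : ℝ, ∀ τ : ℝ, Tθ < τ →
      ∃ (p : Fin m → ℤ) (q : Fin n → ℤ), ¬(p = 0 ∧ q = 0) ∧
        (∀ i, |τ ^ a i * ((p i : ℝ) + ∑ j, θ i j * (q j : ℝ))|
            ≤ τ ^ (-(am * bn * ω / (am + bn + am * ω)))) ∧
        (∀ j, |τ ^ (-b j) * (q j : ℝ)| ≤ τ ^ (-(am * bn * ω / (am + bn + am * ω)))) := by
  obtain ⟨T₀, hT₀⟩ := hsing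
  have ham0 : 0 < am := ham ▸ hapos _
  have hbn0 : 0 < bn := hbn ▸ hbpos _
  have hD : 0 < am + bn := add_pos ham0 hbn0
  have hS : 0 < am + bn + am * ω := by positivity
  have hev : ∀ᶠ τ in atTop, T₀ < τ ^ ((am + bn) / (am + bn + am * ω)) ∧ 1 < τ :=
    ((tendsto_rpow_atTop (by positivity)).eventually_gt_atTop T₀).and (eventually_gt_atTop 1)
  obtain ⟨Tθ, hTθ⟩ := hev.exists_forall_of_atTop
  refine ⟨Tθ, fun τ hτ => ?_⟩
  obtain ⟨hT₀τ, hτ1⟩ := hTθ τ hτ.le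
  obtain ⟨p, q, hq0, hp, hq⟩ := hT₀ _ hT₀τ
  set T := τ ^ ((am + bn) / (am + bn + am * ω))
  have hT1 : 1 ≤ T := Real.one_le_rpow hτ1.le (by positivity)
  have hτT : τ = T ^ ((am + bn + am * ω) / (am + bn)) := by
    rw [← Real.rpow_mul (by linarith), div_mul_div_cancel₀ hS.ne', div_self hD.ne',
      Real.rpow_one]
  refine ⟨p, q, fun h => hq0 h.2, fun i => ?_, fun j => ?_⟩ <;> rw [hτT]
  · have hai : am ≤ a i := ham ▸ ha (Fin.le_def.2 (Nat.le_pred_of_lt i.isLt))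
    exact abs_rpow_rpow_mul_le hT1
      (abs_le_rpow_mul_of_abs_rpow_inv_le (by positivity) (hapos i) (hp i))
      (expanding_exponent_le ham0 hbn0 hai hω hωω')
  · have hbj : bn ≤ b j := hbn ▸ hb (Fin.le_def.2 (Nat.le_pred_of_lt j.isLt))
    have hqj : |(q j : ℝ)| ≤ T ^ b j :=
      (Real.rpow_inv_le_iff_of_pos (abs_nonneg _) (by positivity) (hbpos j)).1 (hq j)
    exact abs_rpow_rpow_mul_le hT1 hqj (contracting_exponent_le ham0 hbj hω hD)

/-- If `θ` is `(a,b,ω')`-singular with `0 < ω < ω'`, then there is `T_θ` such that for all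
`τ > T_θ` the lattice `g_τ u(θ) ℤ^{m+n}` contains a nonzero vector of sup norm at most
`τ^{-a_m b_n ω / (a_m + b_n + a_m ω)}`. -/
theorem stmt_14 (m n : ℕ) (hm : 0 < m) (hn : 0 < n)
    (a : Fin m → ℝ) (b : Fin n → ℝ)
    (ha : Antitone a) (hb : Antitone b)
    (hapos : ∀ i, 0 < a i) (hbpos : ∀ j, 0 < b j)
    (hasum : ∑ i, a i = 1) (hbsum : ∑ j, b j = 1)
    (am bn : ℝ)
    (ham : am = a ⟨m - 1, Nat.sub_lt hm Nat.one_pos⟩)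
    (hbn : bn = b ⟨n - 1, Nat.sub_lt hn Nat.one_pos⟩)
    (ω ω' : ℝ) (hω : 0 < ω) (hωω' : ω < ω')
    (θ : Fin m → Fin n → ℝ)
    (hsing : ∃ T₀ : ℝ, ∀ T : ℝ, T₀ < T →
      ∃ (p : Fin m → ℤ) (q : Fin n → ℤ), q ≠ 0 ∧
        (∀ i, |(p i : ℝ) + ∑ j, θ i j * (q j : ℝ)| ^ (a i)⁻¹ ≤ T ^ (-(1 + ω'))) ∧
        (∀ j, |(q j : ℝ)| ^ (b j)⁻¹ ≤ T)) :
    ∃ Tθ : ℝ, ∀ τ : ℝ, Tθ < τ →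
      ∃ (p : Fin m → ℤ) (q : Fin n → ℤ), ¬(p = 0 ∧ q = 0) ∧
        (∀ i, |τ ^ a i * ((p i : ℝ) + ∑ j, θ i j * (q j : ℝ))|
            ≤ τ ^ (-(am * bn * ω / (am + bn + am * ω)))) ∧
        (∀ j, |τ ^ (-b j) * (q j : ℝ)| ≤ τ ^ (-(am * bn * ω / (am + bn + am * ω)))) :=
  stmt_14_general m n hm hn a b ha hb hapos hbpos am bn ham hbn ω ω' hω hωω' θ hsing
end

section
/- Let Z ⊆ M_{m×n}(ℝ) and suppose t > 1, ε > 0, B > 0, C > 0, and N ∈ ℕ are such that for all integers M > N, Σ_{R ∈ F(M), R ∩ Z ≠ ∅} μ(R) ≤ C B^M t^{−Mε}, where F(M) is the generation-M cylinder cover of the product fractal K by products of cylinders of diameters comparable to t^{−M(a_i + b_j)} in the (i,j) coordinate, and μ(R) is the same for all R ∈ F(M) within each product family. Then dim_P(Z ∩ K) ≤ s − (1/(a_1+b_1))(ε − log B / log t), where s = dim_H(K). -/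
/-! Each generation-`M` product cylinder has measure `∏ |E_ij|^(-N_M(i,j))`, so the hypothesis says
that at most `C B^M t^(-Mε) ∏ |E_ij|^(N_M(i,j))` of them meet `Z`. Refining every coordinate until
all side lengths are comparable to `δ ≈ t^(-M(a_1+b_1))` turns them into a cover of `Z ∩ K` by
`O(δ^(-d))` sets of diameter `≤ δ`, with `d = s - (ε - log B / log t)/(a_1+b_1)`.

Such a box-counting bound kills the packing premeasure in every dimension `u > d`: balls of a
packing with `2r ∈ (ε/2^(k+1), ε/2^k]` have their centres in distinct sets of a cover at scale
`ε/2^(k+2)`, so they contribute `O((ε/2^k)^(u-d))`, and summing over `k` gives `O(ε^(u-d))`. -/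

open MeasureTheory Classical
open scoped ENNReal NNReal

/-- Packing premeasure. -/
noncomputable def prePack {X : Type*} [MetricSpace X] (i : ℝ) (F : Set X) : ℝ≥0∞ :=
  ⨅ (ε : ℝ) (_ : 0 < ε),
    ⨆ (x : ℕ → X) (r : ℕ → ℝ) (S : Set ℕ)
      (_ : ∀ j ∈ S, x j ∈ F) (_ : ∀ j ∈ S, 0 ≤ r j) (_ : ∀ j ∈ S, 2 * r j < ε)
      (_ : S.Pairwise fun j k =>
        Disjoint (Metric.closedBall (x j) (r j)) (Metric.closedBall (x k) (r k))),
      ∑' j : S, ENNReal.ofReal ((2 * r (j : ℕ)) ^ i)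

/-- Packing measure. -/
noncomputable def packMeasure {X : Type*} [MetricSpace X] (i : ℝ) (F : Set X) : ℝ≥0∞ :=
  ⨅ (C : ℕ → Set X) (_ : F ⊆ ⋃ j, C j), ∑' j, prePack i (C j)

/-- Packing dimension. -/
noncomputable def dimP {X : Type*} [MetricSpace X] (F : Set X) : ℝ≥0∞ :=
  ⨅ (i : ℝ≥0) (_ : packMeasure (i : ℝ) F = 0), (i : ℝ≥0∞)

/-- The level-`l` cylinder of the IFS `x ↦ c x + w e` determined by a word `ωl`:
`φ_{e_1} ∘ … ∘ φ_{e_l} (K)`. -/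
def cylImage {α : Type*} (c : ℝ) (w : α → ℝ) (K : Set ℝ) (ωl : List α) : Set ℝ :=
  (fun x => ωl.foldr (fun e y => c * y + w e) x) '' K

section Packing

variable {X : Type*} [MetricSpace X]

def HasBoxCountingBound (F : Set X) (A d : ℝ) : Prop :=
  ∀ δ, 0 < δ → δ < 1 → ∃ T : Finset (Set X), F ⊆ ⋃₀ (T : Set (Set X)) ∧
    (∀ U ∈ T, ∀ x ∈ U, ∀ y ∈ U, dist x y ≤ δ) ∧ (T.card : ℝ) ≤ A * δ ^ (-d)

lemma prePack_le_of_forall {i : ℝ} {F : Set X} {ε : ℝ} (hε : 0 < ε) {b : ℝ≥0∞}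
    (h : ∀ (x : ℕ → X) (r : ℕ → ℝ) (S : Set ℕ), (∀ j ∈ S, x j ∈ F) → (∀ j ∈ S, 0 ≤ r j) →
      (∀ j ∈ S, 2 * r j < ε) →
      S.Pairwise (fun j k =>
        Disjoint (Metric.closedBall (x j) (r j)) (Metric.closedBall (x k) (r k))) →
      ∑' j : S, ENNReal.ofReal ((2 * r (j : ℕ)) ^ i) ≤ b) :
    prePack i F ≤ b :=
  iInf₂_le_of_le ε hε <| iSup_le fun x => iSup_le fun r => iSup_le fun S =>
    iSup_le fun hx => iSup_le fun hr => iSup_le fun hrε => iSup_le fun hS => h x r S hx hr hrε hS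

/-- Each set of diameter `≤ δ` contains at most one centre of a packing by balls of radii `≥ δ`. -/
lemma tsum_packing_le_card_mul {x : ℕ → X} {r : ℕ → ℝ} {S : Set ℕ}
    (hS : S.Pairwise fun j k =>
      Disjoint (Metric.closedBall (x j) (r j)) (Metric.closedBall (x k) (r k)))
    {T : Finset (Set X)} {δ : ℝ} (hcov : ∀ j ∈ S, x j ∈ ⋃₀ (T : Set (Set X)))
    (hT : ∀ U ∈ T, ∀ y ∈ U, ∀ z ∈ U, dist y z ≤ δ) (hr : ∀ j ∈ S, δ ≤ r j)
    {g : ℕ → ℝ≥0∞} {b : ℝ≥0∞} (hg : ∀ j ∈ S, g j ≤ b) :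
    ∑' j : S, g j ≤ T.card * b := by
  choose U hUT hxU using fun j : S => Set.mem_sUnion.1 (hcov j j.2)
  have hinj : Function.Injective fun j : S => (⟨U j, hUT j⟩ : T) := by
    rintro j k hjk
    simp only [Subtype.mk.injEq] at hjk
    by_contra hne
    have hdist : dist (x k) (x j) ≤ δ := hT _ (hUT j) _ (hjk ▸ hxU k) _ (hxU j)
    refine Set.not_disjoint_iff.2 ⟨x k, ?_, ?_⟩ (hS j.2 k.2 (Subtype.coe_ne_coe.2 hne))
    · exact Metric.mem_closedBall.2 (hdist.trans (hr j j.2))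
    · exact Metric.mem_closedBall_self ((dist_nonneg.trans hdist).trans (hr k k.2))
  calc ∑' j : S, g j ≤ ∑' _ : S, b := ENNReal.tsum_le_tsum fun j => hg j j.2
    _ ≤ ∑' _ : T, b := ENNReal.tsum_comp_le_tsum_of_injective hinj fun _ => b
    _ = T.card * b := by simp [tsum_fintype]

lemma HasBoxCountingBound.nonneg {F : Set X} {A d : ℝ} (hF : HasBoxCountingBound F A d) :
    0 ≤ A := by
  obtain ⟨T, -, -, hT⟩ := hF (1 / 2) (by norm_num) (by norm_num)
  exact nonneg_of_mul_nonneg_left ((Nat.cast_nonneg _).trans hT) (by positivity)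

lemma dyadic_term_eq (A d u : ℝ) {ε : ℝ} (hε : 0 < ε) (k : ℕ) :
    A * (ε / 2 ^ (k + 2)) ^ (-d) * (ε / 2 ^ k) ^ u =
      A * 4 ^ d * ε ^ (u - d) * ((2:ℝ) ^ (d - u)) ^ k := by
  set s := ε / 2 ^ k
  have hs : 0 < s := by positivity
  have h4 : ε / 2 ^ (k + 2) = s / 4 := by rw [pow_add]; ring
  have hsq : s ^ (u - d) = ε ^ (u - d) * ((2:ℝ) ^ (d - u)) ^ k := by
    rw [Real.div_rpow hε.le (by positivity), ← Real.rpow_pow_comm (by norm_num),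
      div_eq_mul_inv, ← inv_pow, ← Real.rpow_neg (by positivity), neg_sub]
  rw [mul_assoc _ (ε ^ (u - d)), ← hsq, h4, Real.div_rpow hs.le (by norm_num),
    Real.rpow_neg (by norm_num : (0:ℝ) ≤ 4), div_inv_eq_mul, Real.rpow_sub hs, Real.rpow_neg hs.le]
  field_simp

lemma exists_dyadic_mem_Ioc {y ε : ℝ} (hy : 0 < y) (hyε : y ≤ ε) :
    ∃ k : ℕ, y ∈ Set.Ioc (ε / 2 ^ (k + 1)) (ε / 2 ^ k) := by
  obtain ⟨k, hk1, hk2⟩ := exists_nat_pow_near ((one_le_div hy).2 hyε) one_lt_two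
  refine ⟨k, ?_, ?_⟩
  · rwa [div_lt_iff₀ (by positivity), ← div_lt_iff₀' hy]
  · rwa [le_div_iff₀ (by positivity), ← le_div_iff₀' hy]

lemma tsum_packing_le_tsum_dyadic {F : Set X} {A d : ℝ} (hF : HasBoxCountingBound F A d)
    {u ε : ℝ} (hu : 0 < u) (hε0 : 0 < ε) (hε1 : ε < 1) {x : ℕ → X} {r : ℕ → ℝ} {S : Set ℕ}
    (hx : ∀ j ∈ S, x j ∈ F) (hr : ∀ j ∈ S, 0 ≤ r j) (hrε : ∀ j ∈ S, 2 * r j < ε)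
    (hS : S.Pairwise fun j k =>
      Disjoint (Metric.closedBall (x j) (r j)) (Metric.closedBall (x k) (r k))) :
    ∑' j : S, ENNReal.ofReal ((2 * r j) ^ u) ≤
      ∑' k : ℕ, ENNReal.ofReal (A * (ε / 2 ^ (k + 2)) ^ (-d) * (ε / 2 ^ k) ^ u) := by
  set g : ℕ → ℝ≥0∞ := fun j => ENNReal.ofReal ((2 * r j) ^ u)
  set Sk : ℕ → Set ℕ := fun k => {j | j ∈ S ∧ 2 * r j ∈ Set.Ioc (ε / 2 ^ (k + 1)) (ε / 2 ^ k)}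
  have hsplit : ∀ j, S.indicator g j ≤ ∑' k, (Sk k).indicator g j := by
    intro j
    by_cases hj : j ∈ S
    · rw [Set.indicator_of_mem hj]
      rcases (hr j hj).eq_or_lt with h0 | hpos
      · simp [g, ← h0, Real.zero_rpow hu.ne']
      obtain ⟨k, hk⟩ := exists_dyadic_mem_Ioc (mul_pos two_pos hpos) (hrε j hj).le
      have hmem : j ∈ Sk k := ⟨hj, hk⟩
      exact (Set.indicator_of_mem hmem g).symm.le.trans (ENNReal.le_tsum k)
    · simp [hj]
  have hclass : ∀ k, ∑' j, (Sk k).indicator g j ≤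
      ENNReal.ofReal (A * (ε / 2 ^ (k + 2)) ^ (-d) * (ε / 2 ^ k) ^ u) := by
    intro k
    obtain ⟨T, hTcov, hTdiam, hTcard⟩ :=
      hF (ε / 2 ^ (k + 2)) (by positivity) ((div_lt_one (by positivity)).2
        (hε1.trans_le (one_le_pow₀ one_le_two)))
    have hrad : ∀ j ∈ Sk k, ε / 2 ^ (k + 2) ≤ r j := fun j hj => by
      have : ε / 2 ^ (k + 2) = ε / 2 ^ (k + 1) / 2 := by rw [pow_succ _ (k + 1), div_div]
      linarith [hj.2.1]
    have hcount := tsum_packing_le_card_mul (S := Sk k) (hS.mono fun j hj => hj.1)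
      (fun j hj => hTcov (hx j hj.1)) hTdiam hrad (g := g) (b := ENNReal.ofReal ((ε / 2 ^ k) ^ u))
      (fun j hj => ENNReal.ofReal_le_ofReal
        (Real.rpow_le_rpow (by linarith [hr j hj.1]) hj.2.2 hu.le))
    rw [← tsum_subtype]
    refine hcount.trans ?_
    rw [ENNReal.ofReal_mul ((Nat.cast_nonneg _).trans hTcard), ← ENNReal.ofReal_natCast]
    gcongr
  calc ∑' j : S, g j = ∑' j, S.indicator g j := tsum_subtype S g
    _ ≤ ∑' j, ∑' k, (Sk k).indicator g j := ENNReal.tsum_le_tsum hsplit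
    _ = ∑' k, ∑' j, (Sk k).indicator g j := ENNReal.tsum_comm
    _ ≤ _ := ENNReal.tsum_le_tsum hclass

lemma HasBoxCountingBound.prePack_eq_zero {F : Set X} {A d u : ℝ}
    (hF : HasBoxCountingBound F A d) (hu : 0 < u) (hdu : d < u) : prePack u F = 0 := by
  set ρ : ℝ := (2:ℝ) ^ (d - u)
  have hρ0 : 0 ≤ ρ := by positivity
  have hρ1 : ρ < 1 := Real.rpow_lt_one_of_one_lt_of_neg one_lt_two (by linarith)
  set D := A * 4 ^ d / (1 - ρ)
  have hbound : ∀ ε ∈ Set.Ioo (0:ℝ) 1, prePack u F ≤ ENNReal.ofReal (D * ε ^ (u - d)) := by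
    rintro ε ⟨hε0, hε1⟩
    refine prePack_le_of_forall hε0 fun x r S hx hr hrε hS =>
      (tsum_packing_le_tsum_dyadic hF hu hε0 hε1 hx hr hrε hS).trans (le_of_eq ?_)
    have hnonneg : 0 ≤ A * 4 ^ d * ε ^ (u - d) := by have := hF.nonneg; positivity
    simp_rw [dyadic_term_eq A d u hε0]
    rw [← ENNReal.ofReal_tsum_of_nonneg (fun k => mul_nonneg hnonneg (pow_nonneg hρ0 k))
      ((summable_geometric_of_lt_one hρ0 hρ1).mul_left _), tsum_mul_left,
      tsum_geometric_of_lt_one hρ0 hρ1]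
    congr 1
    ring
  have hlim : Filter.Tendsto (fun ε : ℝ => ENNReal.ofReal (D * ε ^ (u - d)))
      (nhdsWithin 0 (Set.Ioi 0)) (nhds 0) := by
    have hcont : Continuous fun ε : ℝ => ENNReal.ofReal (D * ε ^ (u - d)) :=
      ENNReal.continuous_ofReal.comp
        (continuous_const.mul (Real.continuous_rpow_const (by linarith)))
    simpa [Real.zero_rpow (sub_ne_zero.2 hdu.ne')] using
      (hcont.tendsto 0).mono_left nhdsWithin_le_nhds
  exact nonpos_iff_eq_zero.1 <| ge_of_tendsto hlim <|
    Filter.eventually_of_mem (Ioo_mem_nhdsGT zero_lt_one) hbound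

lemma packMeasure_eq_zero_of_prePack_eq_zero {i : ℝ} {F : Set X} (h : prePack i F = 0) :
    packMeasure i F = 0 :=
  nonpos_iff_eq_zero.1 <| iInf₂_le_of_le (fun _ => F) (Set.subset_iUnion (fun _ => F) 0) <| by
    simp [h]

lemma HasBoxCountingBound.dimP_le {F : Set X} {A d : ℝ} (hF : HasBoxCountingBound F A d) :
    dimP F ≤ ENNReal.ofReal d := by
  refine le_of_forall_gt_imp_ge_of_dense fun b hb => ?_
  obtain ⟨v, hdv, hvb⟩ := ENNReal.lt_iff_exists_nnreal_btwn.1 hb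
  have hv : 0 < (v : ℝ) := by exact_mod_cast zero_le.trans_lt hdv
  have hdv' : d < v := by
    rcases lt_or_ge d 0 with h | h
    · linarith
    · exact (ENNReal.ofReal_lt_ofReal_iff hv).1 (by simpa using hdv)
  exact (iInf₂_le v (packMeasure_eq_zero_of_prePack_eq_zero (hF.prePack_eq_zero hv hdv'))).trans
    hvb.le

end Packing

/-- The first `k` with `r ^ k * x ≤ δ` overshoots by at most one factor `r`. -/
lemma exists_pow_mul_le_of_lt_one {r x δ : ℝ} (hr0 : 0 < r) (hr1 : r < 1) (hδ : 0 < δ) :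
    ∃ k : ℕ, r ^ k * x ≤ δ ∧ min x (r * δ) ≤ r ^ k * x := by
  have hex : ∃ k : ℕ, r ^ k * x ≤ δ := by
    have h := (tendsto_pow_atTop_nhds_zero_of_lt_one hr0.le hr1).mul_const x
    rw [zero_mul] at h
    exact (h.eventually (eventually_le_nhds hδ)).exists
  refine ⟨Nat.find hex, Nat.find_spec hex, ?_⟩
  cases hk : Nat.find hex with
  | zero => simp
  | succ k =>
    have hlt : δ < r ^ k * x := not_le.1 (Nat.find_min hex (by omega))
    calc min x (r * δ) ≤ r * δ := min_le_right _ _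
      _ ≤ r ^ (k + 1) * x := by rw [pow_succ, mul_comm _ r, mul_assoc]; gcongr

lemma exists_pow_mem_Icc {r δ : ℝ} (hr0 : 0 < r) (hr1 : r < 1) (hδ0 : 0 < δ) (hδ1 : δ < 1)
    (N : ℕ) : ∃ M : ℕ, N < M ∧ r ^ (N + 1) * δ ≤ r ^ M ∧ r ^ M ≤ δ := by
  obtain ⟨k, hk, hk'⟩ := exists_pow_mul_le_of_lt_one hr0 hr1 hδ0 (x := r ^ (N + 1))
  rw [← pow_add] at hk hk'
  refine ⟨k + (N + 1), by omega, le_trans (le_min ?_ ?_) hk', hk⟩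
  · exact mul_le_of_le_one_right (by positivity) hδ1.le
  · exact mul_le_mul_of_nonneg_right (pow_le_of_le_one hr0.le hr1.le (by omega)) hδ0.le

lemma exists_pow_add_mul_le {c D δ ρ : ℝ} (hc0 : 0 < c) (hc1 : c < 1) (hD : 0 < D) (hδ : 0 < δ)
    {l : ℕ} (hl : ρ * δ ≤ c ^ l) :
    ∃ k : ℕ, c ^ (l + k) * D ≤ δ ∧ min ρ (c / D) * δ ≤ c ^ (l + k) := by
  obtain ⟨k, hk, hk'⟩ := exists_pow_mul_le_of_lt_one hc0 hc1 hδ (x := c ^ l * D)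
  rw [← mul_assoc, ← pow_add, add_comm] at hk hk'
  refine ⟨k, hk, le_of_mul_le_mul_right (le_trans ?_ hk') hD⟩
  rw [min_mul_of_nonneg _ _ hδ.le, min_mul_of_nonneg _ _ hD.le, div_mul_eq_mul_div,
    div_mul_cancel₀ _ hD.ne']
  gcongr

lemma rpow_le_max_mul_rpow {a δ y : ℝ} (p : ℝ) (ha : 0 < a) (hδ : 0 < δ) (h₁ : a * δ ≤ y)
    (h₂ : y ≤ δ) : y ^ p ≤ max 1 (a ^ p) * δ ^ p := by
  have hy : 0 < y := (mul_pos ha hδ).trans_le h₁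
  rcases le_or_gt 0 p with hp | hp
  · exact (Real.rpow_le_rpow hy.le h₂ hp).trans
      (le_mul_of_one_le_left (by positivity) (le_max_left _ _))
  · calc y ^ p ≤ (a * δ) ^ p := Real.rpow_le_rpow_of_nonpos (mul_pos ha hδ) h₁ hp.le
      _ = a ^ p * δ ^ p := Real.mul_rpow ha.le hδ.le
      _ ≤ max 1 (a ^ p) * δ ^ p := by gcongr; exact le_max_right _ _

lemma pow_mul_rpow_eq {t B : ℝ} (ht : 1 < t) (hB : 0 < B) {α : ℝ} (hα : α ≠ 0) (ε : ℝ) (M : ℕ) :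
    B ^ M * t ^ (-(M : ℝ) * ε) = ((t ^ (-α)) ^ M) ^ ((ε - Real.log B / Real.log t) / α) := by
  have ht0 : 0 < t := by linarith
  have hB' : B ^ M = t ^ (Real.logb t B * M) := by
    rw [Real.rpow_mul_natCast ht0.le, Real.rpow_logb ht0 ht.ne' hB]
  rw [hB', ← Real.rpow_mul_natCast ht0.le, ← Real.rpow_add ht0, ← Real.rpow_mul ht0.le,
    Real.log_div_log]
  congr 1
  field_simp
  ring

lemma natCast_pow_le_rpow {c y : ℝ} {q L : ℕ} (hc0 : 0 < c) (hc1 : c < 1) (hq : 0 < q)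
    (hy : 0 < y) (hyc : y ≤ c ^ L) : (q : ℝ) ^ L ≤ y ^ (-(-Real.log q / Real.log c)) := by
  have hq' : (0:ℝ) < q := by exact_mod_cast hq
  have hexp : -(-Real.log q / Real.log c) = Real.logb c q := by rw [neg_div, neg_neg]; rfl
  rw [hexp]
  calc (q : ℝ) ^ L = (c ^ L) ^ Real.logb c q := by
        rw [← Real.rpow_pow_comm hc0.le, Real.rpow_logb hc0 hc1.ne hq']
    _ ≤ y ^ Real.logb c q := Real.rpow_le_rpow_of_nonpos hy hyc
        ((Real.logb_nonpos_iff_of_base_lt_one hc0 hc1 hq').2 (by exact_mod_cast hq))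

section Cylinders

variable {α : Type*} {c : ℝ} {w : α → ℝ} {K : Set ℝ}

lemma cylImage_cons (e : α) (l : List α) :
    cylImage c w K (e :: l) = (fun x => c * x + w e) '' cylImage c w K l := by
  simp only [cylImage, List.foldr_cons, Set.image_image]

lemma cylImage_append (l₁ l₂ : List α) :
    cylImage c w K (l₁ ++ l₂) =
      (fun x => l₁.foldr (fun e y => c * y + w e) x) '' cylImage c w K l₂ := by
  simp only [cylImage, List.foldr_append, Set.image_image]

lemma foldr_affine_sub (l : List α) (x y : ℝ) :
    l.foldr (fun e y => c * y + w e) x - l.foldr (fun e y => c * y + w e) y =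
      c ^ l.length * (x - y) := by
  induction l with
  | nil => simp
  | cons e l ih =>
    simp only [List.foldr_cons, List.length_cons, pow_succ]
    linear_combination c * ih

lemma abs_sub_le_of_mem_cylImage (hc0 : 0 ≤ c) (hK : Bornology.IsBounded K) {l : List α}
    {u v : ℝ} (hu : u ∈ cylImage c w K l) (hv : v ∈ cylImage c w K l) :
    |u - v| ≤ c ^ l.length * Metric.diam K := by
  obtain ⟨x, hx, rfl⟩ := hu
  obtain ⟨y, hy, rfl⟩ := hv
  rw [foldr_affine_sub, abs_mul, abs_of_nonneg (pow_nonneg hc0 _), ← Real.dist_eq]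
  exact mul_le_mul_of_nonneg_left (Metric.dist_le_diam_of_mem hK hx hy) (pow_nonneg hc0 _)

end Cylinders

section SelfSimilar

variable {α : Type*} {c : ℝ} {w : α → ℝ}

def ifsLimit (c : ℝ) (w : α → ℝ) : Set ℝ :=
  Set.range fun bs : ℕ → α => ∑' k, c ^ k * w (bs k)

variable [Finite α] (hc0 : 0 ≤ c) (hc1 : c < 1)
include hc0 hc1

lemma summable_pow_mul_comp (bs : ℕ → α) : Summable fun k => c ^ k * w (bs k) := by
  obtain ⟨W, hW⟩ := Finite.exists_le fun e => ‖w e‖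
  refine Summable.of_norm_bounded ((summable_geometric_of_lt_one hc0 hc1).mul_right W) fun k => ?_
  rw [norm_mul, norm_pow, Real.norm_of_nonneg hc0]
  exact mul_le_mul_of_nonneg_left (hW _) (pow_nonneg hc0 k)

lemma tsum_pow_mul_comp_eq (bs : ℕ → α) :
    ∑' k, c ^ k * w (bs k) = c * ∑' k, c ^ k * w (bs (k + 1)) + w (bs 0) := by
  rw [(summable_pow_mul_comp hc0 hc1 bs).tsum_eq_zero_add, ← tsum_mul_left]
  simp only [pow_zero, one_mul, pow_succ, mul_comm _ c, mul_assoc]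
  ring

lemma ifsLimit_eq_iUnion_image : ifsLimit c w = ⋃ e, (fun x => c * x + w e) '' ifsLimit c w := by
  ext x
  simp only [ifsLimit, Set.mem_iUnion, Set.mem_image, Set.mem_range]
  constructor
  · rintro ⟨bs, rfl⟩
    exact ⟨bs 0, _, ⟨fun k => bs (k + 1), rfl⟩, (tsum_pow_mul_comp_eq hc0 hc1 bs).symm⟩
  · rintro ⟨e, y, ⟨bs, rfl⟩, rfl⟩
    exact ⟨fun k => Nat.casesOn k e bs, tsum_pow_mul_comp_eq hc0 hc1 _⟩

lemma isBounded_ifsLimit : Bornology.IsBounded (ifsLimit c w) := by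
  obtain ⟨W, hW⟩ := Finite.exists_le fun e => ‖w e‖
  refine (Metric.isBounded_iff_subset_closedBall 0).2 ⟨W * (1 - c)⁻¹, ?_⟩
  rintro _ ⟨bs, rfl⟩
  rw [Metric.mem_closedBall, dist_zero_right]
  refine tsum_of_norm_bounded ((hasSum_geometric_of_lt_one hc0 hc1).mul_left W) fun k => ?_
  rw [norm_mul, norm_pow, Real.norm_of_nonneg hc0, mul_comm W]
  exact mul_le_mul_of_nonneg_left (hW _) (pow_nonneg hc0 k)

lemma image_subset_ifsLimit (e : α) : (fun x => c * x + w e) '' ifsLimit c w ⊆ ifsLimit c w := by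
  conv_rhs => rw [ifsLimit_eq_iUnion_image hc0 hc1]
  exact Set.subset_iUnion (fun e => (fun x => c * x + w e) '' ifsLimit c w) e

lemma cylImage_subset_ifsLimit (l : List α) : cylImage c w (ifsLimit c w) l ⊆ ifsLimit c w := by
  induction l with
  | nil => simp [cylImage]
  | cons e l ih =>
    rw [cylImage_cons]
    exact (Set.image_mono ih).trans (image_subset_ifsLimit hc0 hc1 e)

lemma cylImage_append_subset (l₁ l₂ : List α) :
    cylImage c w (ifsLimit c w) (l₁ ++ l₂) ⊆ cylImage c w (ifsLimit c w) l₁ := by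
  rw [cylImage_append]
  exact Set.image_mono (cylImage_subset_ifsLimit hc0 hc1 l₂)

lemma exists_mem_cylImage_ofFn (n : ℕ) {x : ℝ} (hx : x ∈ ifsLimit c w) :
    ∃ f : Fin n → α, x ∈ cylImage c w (ifsLimit c w) (List.ofFn f) := by
  induction n generalizing x with
  | zero => exact ⟨Fin.elim0, by simpa [cylImage] using hx⟩
  | succ n ih =>
    rw [ifsLimit_eq_iUnion_image hc0 hc1] at hx
    obtain ⟨e, y, hy, rfl⟩ := Set.mem_iUnion.1 hx
    obtain ⟨f, hf⟩ := ih hy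
    exact ⟨Fin.cons e f, by rw [List.ofFn_cons, cylImage_cons]; exact Set.mem_image_of_mem _ hf⟩

end SelfSimilar

section ProductCylinders

variable {ι κ : Type*} {E : ι → κ → Type*}

def prodCyl (c : ι → κ → ℝ) (w : ∀ i j, E i j → ℝ) {L : ι → κ → ℕ}
    (ω : ∀ i j, Fin (L i j) → E i j) : Set (ι → κ → ℝ) :=
  {θ | ∀ i j, θ i j ∈ cylImage (c i j) (w i j) (ifsLimit (c i j) (w i j)) (List.ofFn (ω i j))}

variable {c : ι → κ → ℝ} {w : ∀ i j, E i j → ℝ}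

lemma prodCyl_subset_prodCyl_castAdd [∀ i j, Finite (E i j)] (hc0 : ∀ i j, 0 ≤ c i j)
    (hc1 : ∀ i j, c i j < 1) {L p : ι → κ → ℕ} (ω : ∀ i j, Fin (L i j + p i j) → E i j) :
    prodCyl c w ω ⊆ prodCyl c w fun i j k => ω i j (Fin.castAdd (p i j) k) := by
  intro θ hθ i j
  have hθij := hθ i j
  rw [List.ofFn_add] at hθij
  exact cylImage_append_subset (hc0 i j) (hc1 i j) _ _ hθij

lemma exists_mem_prodCyl [∀ i j, Finite (E i j)] (hc0 : ∀ i j, 0 ≤ c i j)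
    (hc1 : ∀ i j, c i j < 1) {θ : ι → κ → ℝ} (hθ : ∀ i j, θ i j ∈ ifsLimit (c i j) (w i j))
    (L : ι → κ → ℕ) : ∃ ω : ∀ i j, Fin (L i j) → E i j, θ ∈ prodCyl c w ω := by
  choose ω hω using fun i j => exists_mem_cylImage_ofFn (hc0 i j) (hc1 i j) (L i j) (hθ i j)
  exact ⟨ω, hω⟩

lemma dist_le_of_mem_prodCyl [Fintype ι] [Fintype κ] [∀ i j, Finite (E i j)]
    (hc0 : ∀ i j, 0 ≤ c i j) (hc1 : ∀ i j, c i j < 1) {L : ι → κ → ℕ}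
    {ω : ∀ i j, Fin (L i j) → E i j} {δ : ℝ} (hδ : 0 ≤ δ)
    (hL : ∀ i j, c i j ^ L i j * Metric.diam (ifsLimit (c i j) (w i j)) ≤ δ) {θ θ' : ι → κ → ℝ}
    (hθ : θ ∈ prodCyl c w ω) (hθ' : θ' ∈ prodCyl c w ω) : dist θ θ' ≤ δ := by
  refine (dist_pi_le_iff hδ).2 fun i => (dist_pi_le_iff hδ).2 fun j => ?_
  rw [Real.dist_eq]
  have := abs_sub_le_of_mem_cylImage (hc0 i j) (isBounded_ifsLimit (hc0 i j) (hc1 i j))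
    (hθ i j) (hθ' i j)
  rw [List.length_ofFn] at this
  exact this.trans (hL i j)

variable [Fintype ι] [Fintype κ] [∀ i j, Fintype (E i j)]

lemma prod_card_pow_le [∀ i j, Nonempty (E i j)] (hc0 : ∀ i j, 0 < c i j)
    (hc1 : ∀ i j, c i j < 1) {a : ι → κ → ℝ} (ha : ∀ i j, 0 < a i j) {δ : ℝ} (hδ : 0 < δ)
    {L : ι → κ → ℕ} (hL : ∀ i j, a i j * δ ≤ c i j ^ L i j) :
    ∏ i, ∏ j, (Fintype.card (E i j) : ℝ) ^ L i j ≤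
      (∏ i, ∏ j, a i j ^ (-(-Real.log (Fintype.card (E i j)) / Real.log (c i j)))) *
        δ ^ (-∑ i, ∑ j, (-Real.log (Fintype.card (E i j)) / Real.log (c i j))) := by
  calc _ ≤ ∏ i, ∏ j, (a i j * δ) ^ (-(-Real.log (Fintype.card (E i j)) / Real.log (c i j))) :=
        Finset.prod_le_prod (fun _ _ => by positivity) fun i _ =>
          Finset.prod_le_prod (fun _ _ => by positivity) fun j _ =>
            natCast_pow_le_rpow (hc0 i j) (hc1 i j) Fintype.card_pos
              (mul_pos (ha i j) hδ) (hL i j)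
    _ = _ := by
        simp only [Real.mul_rpow (ha _ _).le hδ.le, Finset.prod_mul_distrib,
          ← Finset.sum_neg_distrib, Real.rpow_sum_of_pos hδ]

variable [DecidableEq ι] [DecidableEq κ]

variable (c w) in
noncomputable def meetingWords (Z : Set (ι → κ → ℝ)) (L : ι → κ → ℕ) :
    Finset (∀ i j, Fin (L i j) → E i j) :=
  Finset.univ.filter fun ω => (prodCyl c w ω ∩ Z).Nonempty

lemma card_meetingWords_le_of_sum_measure_le [∀ i j, Nonempty (E i j)] {L : ι → κ → ℕ}
    {μ : Measure (ι → κ → ℝ)}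
    (hμ : ∀ ω : ∀ i j, Fin (L i j) → E i j,
      μ (prodCyl c w ω) = ∏ i, ∏ j, ((Fintype.card (E i j) : ℝ≥0∞))⁻¹ ^ L i j)
    {Z : Set (ι → κ → ℝ)} {X : ℝ} (hX : 0 ≤ X)
    (hsum : ∑ ω : ∀ i j, Fin (L i j) → E i j,
      (if (prodCyl c w ω ∩ Z).Nonempty then μ (prodCyl c w ω) else 0) ≤ ENNReal.ofReal X) :
    ((meetingWords c w Z L).card : ℝ) ≤ X * ∏ i, ∏ j, (Fintype.card (E i j) : ℝ) ^ L i j := by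
  set P : ℝ≥0∞ := ∏ i, ∏ j, ((Fintype.card (E i j) : ℝ≥0∞))⁻¹ ^ L i j
  set Q : ℝ≥0∞ := ∏ i, ∏ j, (Fintype.card (E i j) : ℝ≥0∞) ^ L i j
  have hPQ : P * Q = 1 := by
    simp only [P, Q, ← Finset.prod_mul_distrib, ← mul_pow]
    simp [ENNReal.inv_mul_cancel, Fintype.card_ne_zero]
  have hcard : ((meetingWords c w Z L).card : ℝ≥0∞) * P ≤ ENNReal.ofReal X := by
    refine le_of_eq_of_le ?_ hsum
    simp [meetingWords, Finset.sum_ite, hμ, P]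
  have hQtop : Q ≠ ⊤ := by simp [Q, ENNReal.prod_ne_top]
  calc ((meetingWords c w Z L).card : ℝ)
      = (((meetingWords c w Z L).card : ℝ≥0∞) * P * Q).toReal := by
        rw [mul_assoc, hPQ, mul_one, ENNReal.toReal_natCast]
    _ ≤ (ENNReal.ofReal X * Q).toReal :=
        ENNReal.toReal_mono (ENNReal.mul_ne_top ENNReal.ofReal_ne_top hQtop) (by gcongr)
    _ = X * ∏ i, ∏ j, (Fintype.card (E i j) : ℝ) ^ L i j := by
        simp [Q, ENNReal.toReal_prod, ENNReal.toReal_ofReal hX]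

lemma exists_cover_card_le_meetingWords (hc0 : ∀ i j, 0 ≤ c i j) (hc1 : ∀ i j, c i j < 1)
    (Z : Set (ι → κ → ℝ)) {δ : ℝ} (hδ : 0 ≤ δ) {L : ι → κ → ℕ}
    (hL : ∀ i j, c i j ^ L i j * Metric.diam (ifsLimit (c i j) (w i j)) ≤ δ) :
    ∃ T : Finset (Set (ι → κ → ℝ)),
      Z ∩ {θ | ∀ i j, θ i j ∈ ifsLimit (c i j) (w i j)} ⊆ ⋃₀ (T : Set (Set _)) ∧
      (∀ U ∈ T, ∀ x ∈ U, ∀ y ∈ U, dist x y ≤ δ) ∧ T.card ≤ (meetingWords c w Z L).card := by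
  refine ⟨(meetingWords c w Z L).image (prodCyl c w), ?_, ?_, Finset.card_image_le⟩
  · rintro θ ⟨hθZ, hθK⟩
    obtain ⟨ω, hω⟩ := exists_mem_prodCyl hc0 hc1 hθK L
    refine Set.mem_sUnion.2 ⟨prodCyl c w ω, ?_, hω⟩
    simp only [Finset.coe_image, meetingWords, Finset.coe_filter, Finset.mem_univ, true_and]
    exact Set.mem_image_of_mem _ ⟨θ, hω, hθZ⟩
  · simp only [Finset.mem_image]
    rintro _ ⟨ω, -, rfl⟩ x hx y hy
    exact dist_le_of_mem_prodCyl hc0 hc1 hδ hL hx hy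

lemma card_meetingWords_add_le (hc0 : ∀ i j, 0 ≤ c i j) (hc1 : ∀ i j, c i j < 1)
    (Z : Set (ι → κ → ℝ)) (L k : ι → κ → ℕ) :
    (meetingWords c w Z fun i j => L i j + k i j).card ≤
      (meetingWords c w Z L).card * ∏ i, ∏ j, Fintype.card (E i j) ^ k i j := by
  let split : (∀ i j, Fin (L i j + k i j) → E i j) →
      (∀ i j, Fin (L i j) → E i j) × (∀ i j, Fin (k i j) → E i j) :=
    fun ω => (fun i j l => ω i j (Fin.castAdd (k i j) l), fun i j l => ω i j (Fin.natAdd (L i j) l))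
  have hsplit : Function.Injective split := fun ω ω' h => by
    funext i j
    rw [← Fin.append_castAdd_natAdd (f := ω i j), ← Fin.append_castAdd_natAdd (f := ω' i j)]
    simp only [split, Prod.mk.injEq] at h
    rw [congrFun (congrFun h.1 i) j, congrFun (congrFun h.2 i) j]
  calc _ ≤ (meetingWords c w Z L ×ˢ (Finset.univ : Finset (∀ i j, Fin (k i j) → E i j))).card := by
        refine Finset.card_le_card_of_injOn split (fun ω hω => ?_) hsplit.injOn
        simp only [meetingWords, Finset.coe_filter, Finset.mem_univ, true_and,
          Finset.coe_product, Finset.coe_univ, Set.mem_prod, Set.mem_univ, and_true] at hω ⊢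
        exact hω.mono (Set.inter_subset_inter_left _ (prodCyl_subset_prodCyl_castAdd hc0 hc1 ω))
    _ = _ := by simp [Finset.card_product, Fintype.card_pi]

lemma card_meetingWords_add_le_mul_rpow [∀ i j, Nonempty (E i j)] (hc0 : ∀ i j, 0 < c i j)
    (hc1 : ∀ i j, c i j < 1) {Z : Set (ι → κ → ℝ)} {L k : ι → κ → ℕ} {X : ℝ}
    (hX : ((meetingWords c w Z L).card : ℝ) ≤ X * ∏ i, ∏ j, (Fintype.card (E i j) : ℝ) ^ L i j)
    {a : ι → κ → ℝ} (ha : ∀ i j, 0 < a i j) {δ : ℝ} (hδ : 0 < δ)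
    (hLk : ∀ i j, a i j * δ ≤ c i j ^ (L i j + k i j)) :
    ((meetingWords c w Z fun i j => L i j + k i j).card : ℝ) ≤
      X * ((∏ i, ∏ j, a i j ^ (-(-Real.log (Fintype.card (E i j)) / Real.log (c i j)))) *
        δ ^ (-∑ i, ∑ j, (-Real.log (Fintype.card (E i j)) / Real.log (c i j)))) := by
  have hX0 : 0 ≤ X := nonneg_of_mul_nonneg_left ((Nat.cast_nonneg _).trans hX) (by positivity)
  calc _ ≤ ((meetingWords c w Z L).card : ℝ) * ∏ i, ∏ j, (Fintype.card (E i j) : ℝ) ^ k i j := by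
        exact_mod_cast card_meetingWords_add_le (fun i j => (hc0 i j).le) hc1 Z L k
    _ ≤ X * ∏ i, ∏ j, (Fintype.card (E i j) : ℝ) ^ (L i j + k i j) := by
        grw [hX]
        simp only [pow_add, Finset.prod_mul_distrib, mul_assoc, le_refl]
    _ ≤ _ := by gcongr; exact prod_card_pow_le hc0 hc1 ha hδ hLk

theorem hasBoxCountingBound_of_card_meetingWords_le [∀ i j, Nonempty (E i j)]
    (hc0 : ∀ i j, 0 < c i j) (hc1 : ∀ i j, c i j < 1)
    {t α ε B C : ℝ} (ht : 1 < t) (hα : 0 < α) (hB : 0 < B) (hC : 0 ≤ C) {N : ℕ}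
    {NM : ℕ → ι → κ → ℕ} (hNM : ∀ (M : ℕ) i j, t ^ (-(M : ℝ) * α) ≤ c i j ^ NM M i j)
    {Z : Set (ι → κ → ℝ)}
    (hcount : ∀ M, N < M → ((meetingWords c w Z (NM M)).card : ℝ) ≤
      C * B ^ M * t ^ (-(M : ℝ) * ε) * ∏ i, ∏ j, (Fintype.card (E i j) : ℝ) ^ NM M i j) :
    ∃ A, HasBoxCountingBound (Z ∩ {θ | ∀ i j, θ i j ∈ ifsLimit (c i j) (w i j)}) A
      ((∑ i, ∑ j, (-Real.log (Fintype.card (E i j)) / Real.log (c i j)))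
        - (1 / α) * (ε - Real.log B / Real.log t)) := by
  set r := t ^ (-α)
  have hr0 : 0 < r := by positivity
  have hr1 : r < 1 := Real.rpow_lt_one_of_one_lt_of_neg ht (neg_neg_of_pos hα)
  set D : ι → κ → ℝ := fun i j => Metric.diam (ifsLimit (c i j) (w i j)) + 1
  have hD : ∀ i j, 0 < D i j := fun i j => by positivity
  set a : ι → κ → ℝ := fun i j => min (r ^ (N + 1)) (c i j / D i j)
  have ha : ∀ i j, 0 < a i j := fun i j => lt_min (by positivity) (div_pos (hc0 i j) (hD i j))
  set γ := (ε - Real.log B / Real.log t) / α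
  set s : ι → κ → ℝ := fun i j => -Real.log (Fintype.card (E i j)) / Real.log (c i j)
  refine ⟨C * max 1 ((r ^ (N + 1)) ^ γ) * ∏ i, ∏ j, a i j ^ (-s i j), fun δ hδ0 hδ1 => ?_⟩
  -- `M` is the generation whose sides `t ^ (-M α)` are closest to `δ`; `k i j` then refines
  -- coordinate `(i, j)` until its side drops below `δ`.
  obtain ⟨M, hNM_lt, hM_lo, hM_hi⟩ := exists_pow_mem_Icc hr0 hr1 hδ0 hδ1 N
  have hrM : ∀ i j, r ^ M ≤ c i j ^ NM M i j := fun i j => by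
    rw [← Real.rpow_mul_natCast (by linarith), mul_comm, ← neg_mul_comm]
    exact hNM M i j
  choose k hk_diam hLk using fun i j =>
    exists_pow_add_mul_le (hc0 i j) (hc1 i j) (hD i j) hδ0 (hM_lo.trans (hrM i j))
  obtain ⟨T, hTcov, hTdiam, hTcard⟩ := exists_cover_card_le_meetingWords
    (fun i j => (hc0 i j).le) hc1 Z hδ0.le (L := fun i j => NM M i j + k i j) fun i j =>
      (mul_le_mul_of_nonneg_left (le_add_of_nonneg_right zero_le_one)
        (pow_nonneg (hc0 i j).le _)).trans (hk_diam i j)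
  refine ⟨T, hTcov, hTdiam, ?_⟩
  have hgrowth : B ^ M * t ^ (-(M : ℝ) * ε) ≤ max 1 ((r ^ (N + 1)) ^ γ) * δ ^ γ := by
    rw [pow_mul_rpow_eq ht hB hα.ne']
    exact rpow_le_max_mul_rpow γ (by positivity) hδ0 hM_lo hM_hi
  calc (T.card : ℝ)
      ≤ C * B ^ M * t ^ (-(M : ℝ) * ε) * ((∏ i, ∏ j, a i j ^ (-s i j)) * δ ^ (-∑ i, ∑ j, s i j)) :=
        (Nat.cast_le.2 hTcard).trans
          (card_meetingWords_add_le_mul_rpow hc0 hc1 (hcount M hNM_lt) ha hδ0 hLk)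
    _ ≤ C * (max 1 ((r ^ (N + 1)) ^ γ) * δ ^ γ) *
          ((∏ i, ∏ j, a i j ^ (-s i j)) * δ ^ (-∑ i, ∑ j, s i j)) := by
        have hprod : 0 ≤ ∏ i, ∏ j, a i j ^ (-s i j) :=
          Finset.prod_nonneg fun i _ => Finset.prod_nonneg fun j _ => Real.rpow_nonneg (ha i j).le _
        rw [mul_assoc C]
        gcongr
    _ = _ := by
        rw [show -(∑ i, ∑ j, -Real.log (Fintype.card (E i j)) / Real.log (c i j) -
            1 / α * (ε - Real.log B / Real.log t)) = γ + -∑ i, ∑ j, s i j by simp only [γ, s]; ring,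
          Real.rpow_add hδ0]
        ring

end ProductCylinders

theorem stmt_17_general (m n : ℕ) (hm : 0 < m) (hn : 0 < n)
    (a : Fin m → ℝ) (b : Fin n → ℝ)
    (ha : Antitone a) (hb : Antitone b)
    (hapos : ∀ i, 0 < a i) (hbpos : ∀ j, 0 < b j)
    (E : Fin m → Fin n → Type) [∀ i j, Fintype (E i j)] [∀ i j, Nonempty (E i j)]
    (c : Fin m → Fin n → ℝ) (hc0 : ∀ i j, 0 < c i j) (hc1 : ∀ i j, c i j < 1)
    (w : ∀ i j, E i j → ℝ)
    (K : Fin m → Fin n → Set ℝ)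
    (hK : ∀ i j, K i j = Set.range fun bs : ℕ → E i j => ∑' k : ℕ, (c i j) ^ k * w i j (bs k))
    (t : ℝ) (ht : 1 < t) (ε B C : ℝ) (hB : 0 < B) (hC : 0 < C) (N : ℕ)
    (NM : ℕ → Fin m → Fin n → ℕ)
    (hNM : ∀ M i j, (c i j) ^ (NM M i j + 1) < t ^ (-(M : ℝ) * (a i + b j)) ∧
      t ^ (-(M : ℝ) * (a i + b j)) ≤ (c i j) ^ (NM M i j))
    (μ : Measure (Fin m → Fin n → ℝ))
    (hμcyl : ∀ (M : ℕ) (ω : ∀ i j, Fin (NM M i j) → E i j),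
      μ {θ | ∀ i j, θ i j ∈ cylImage (c i j) (w i j) (K i j) (List.ofFn (ω i j))}
        = ∏ i, ∏ j, ((Fintype.card (E i j) : ℝ≥0∞))⁻¹ ^ NM M i j)
    (Z : Set (Fin m → Fin n → ℝ))
    (hcount : ∀ M : ℕ, N < M →
      ∑ ω : ∀ i j, Fin (NM M i j) → E i j,
        (if ({θ : Fin m → Fin n → ℝ |
              ∀ i j, θ i j ∈ cylImage (c i j) (w i j) (K i j) (List.ofFn (ω i j))} ∩ Z).Nonempty
          then μ {θ | ∀ i j, θ i j ∈ cylImage (c i j) (w i j) (K i j) (List.ofFn (ω i j))}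
          else 0)
        ≤ ENNReal.ofReal (C * B ^ M * t ^ (-(M : ℝ) * ε))) :
    dimP (Z ∩ {θ : Fin m → Fin n → ℝ | ∀ i j, θ i j ∈ K i j}) ≤
      ENNReal.ofReal
        ((∑ i, ∑ j, (-Real.log (Fintype.card (E i j)) / Real.log (c i j)))
          - (1 / (a ⟨0, hm⟩ + b ⟨0, hn⟩)) * (ε - Real.log B / Real.log t)) := by
  have hNM' : ∀ (M : ℕ) i j, t ^ (-(M : ℝ) * (a ⟨0, hm⟩ + b ⟨0, hn⟩)) ≤ c i j ^ NM M i j :=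
    fun M i j => le_trans (Real.rpow_le_rpow_of_exponent_le ht.le <|
      mul_le_mul_of_nonpos_left (add_le_add (ha (Nat.zero_le i.val)) (hb (Nat.zero_le j.val)))
        (neg_nonpos.2 M.cast_nonneg)) (hNM M i j).2
  obtain rfl : K = fun i j => ifsLimit (c i j) (w i j) := funext₂ hK
  have hcount' : ∀ M, N < M → ((meetingWords c w Z (NM M)).card : ℝ) ≤
      C * B ^ M * t ^ (-(M : ℝ) * ε) * ∏ i, ∏ j, (Fintype.card (E i j) : ℝ) ^ NM M i j :=
    fun M hM => card_meetingWords_le_of_sum_measure_le (hμcyl M) (by positivity) (hcount M hM)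
  obtain ⟨A, hA⟩ := hasBoxCountingBound_of_card_meetingWords_le hc0 hc1 ht
    (add_pos (hapos _) (hbpos _)) hB hC.le hNM' hcount'
  exact hA.dimP_le

/-- Observation 8: if the total `μ`-measure of generation-`M` product cylinders meeting `Z`
is at most `C B^M t^{-Mε}` for all `M > N`, then
`dim_P (Z ∩ K) ≤ s − (ε − log B / log t)/(a_1 + b_1)`. -/
theorem stmt_17 (m n : ℕ) (hm : 0 < m) (hn : 0 < n)
    (a : Fin m → ℝ) (b : Fin n → ℝ)
    (ha : Antitone a) (hb : Antitone b)
    (hapos : ∀ i, 0 < a i) (hbpos : ∀ j, 0 < b j)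
    (hasum : ∑ i, a i = 1) (hbsum : ∑ j, b j = 1)
    (E : Fin m → Fin n → Type) [∀ i j, Fintype (E i j)] [∀ i j, Nonempty (E i j)]
    (hcard : ∀ i j, 2 ≤ Fintype.card (E i j))
    (c : Fin m → Fin n → ℝ) (hc0 : ∀ i j, 0 < c i j) (hc1 : ∀ i j, c i j < 1)
    (w : ∀ i j, E i j → ℝ)
    (hOSC : ∀ i j, ∃ U : Set ℝ, IsOpen U ∧ U.Nonempty ∧
      (∀ e : E i j, (fun x => c i j * x + w i j e) '' U ⊆ U) ∧
      ∀ e e' : E i j, e ≠ e' →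
        Disjoint ((fun x => c i j * x + w i j e) '' U) ((fun x => c i j * x + w i j e') '' U))
    (K : Fin m → Fin n → Set ℝ)
    (hK : ∀ i j, K i j = Set.range fun bs : ℕ → E i j => ∑' k : ℕ, (c i j) ^ k * w i j (bs k))
    (t : ℝ) (ht : 1 < t) (ε B C : ℝ) (hε : 0 < ε) (hB : 0 < B) (hC : 0 < C) (N : ℕ)
    (NM : ℕ → Fin m → Fin n → ℕ)
    (hNM : ∀ M i j, (c i j) ^ (NM M i j + 1) < t ^ (-(M : ℝ) * (a i + b j)) ∧
      t ^ (-(M : ℝ) * (a i + b j)) ≤ (c i j) ^ (NM M i j))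
    (μ : Measure (Fin m → Fin n → ℝ))
    (hμcyl : ∀ (M : ℕ) (ω : ∀ i j, Fin (NM M i j) → E i j),
      μ {θ | ∀ i j, θ i j ∈ cylImage (c i j) (w i j) (K i j) (List.ofFn (ω i j))}
        = ∏ i, ∏ j, ((Fintype.card (E i j) : ℝ≥0∞))⁻¹ ^ NM M i j)
    (Z : Set (Fin m → Fin n → ℝ))
    (hcount : ∀ M : ℕ, N < M →
      ∑ ω : ∀ i j, Fin (NM M i j) → E i j,
        (if ({θ : Fin m → Fin n → ℝ |
              ∀ i j, θ i j ∈ cylImage (c i j) (w i j) (K i j) (List.ofFn (ω i j))} ∩ Z).Nonempty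
          then μ {θ | ∀ i j, θ i j ∈ cylImage (c i j) (w i j) (K i j) (List.ofFn (ω i j))}
          else 0)
        ≤ ENNReal.ofReal (C * B ^ M * t ^ (-(M : ℝ) * ε))) :
    dimP (Z ∩ {θ : Fin m → Fin n → ℝ | ∀ i j, θ i j ∈ K i j}) ≤
      ENNReal.ofReal
        ((∑ i, ∑ j, (-Real.log (Fintype.card (E i j)) / Real.log (c i j)))
          - (1 / (a ⟨0, hm⟩ + b ⟨0, hn⟩)) * (ε - Real.log B / Real.log t)) :=
  stmt_17_general m n hm hn a b ha hb hapos hbpos E c hc0 hc1 w K hK t ht ε B C hB hC N NM hNM μ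
    hμcyl Z hcount
end
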